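/- arXiv:1905.07658 — 14 statements merged into one kernel-verified Lean document; each statement's English description precedes it below -/
import Mathlib

section
/- The function G_1(y) = g_1^{-1}(y)/y is strictly decreasing for y > 0, where g_1(x) = x·tan(x) maps (0, π/2) bijectively onto (0, ∞). -/
/-! Writing `x = g₁⁻¹(y)`, we have `G₁(y) = x / (x tan x) = cot x`: the inverse of the
increasing `g₁` is increasing and `cot` decreases on `(0, π/2)`. -/

open Set Real

theorem StrictMonoOn.strictMonoOn_of_rightInvOn {α β : Type*} [LinearOrder α] [Preorder β]
    {f : α → β} {g : β → α} {s : Set α} {t : Set β} (hf : StrictMonoOn f s)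
    (hg : MapsTo g t s) (hfg : RightInvOn g f t) : StrictMonoOn g t := by
  intro a ha b hb hab
  rwa [← hf.lt_iff_lt (hg ha) (hg hb), hfg ha, hfg hb]

theorem Real.strictMonoOn_mul_tan : StrictMonoOn (fun x => x * tan x) (Ico 0 (π / 2)) := by
  rintro a ⟨ha₀, ha⟩ b ⟨hb₀, hb⟩ hab
  exact mul_lt_mul' hab.le (tan_lt_tan_of_nonneg_of_lt_pi_div_two ha₀ hb hab)
    (tan_nonneg_of_nonneg_of_le_pi_div_two ha₀ ha.le) (ha₀.trans_lt hab)

theorem Real.strictAntiOn_inv_tan : StrictAntiOn (fun x => (tan x)⁻¹) (Ioo 0 (π / 2)) := by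
  rintro a ⟨ha₀, ha⟩ b ⟨-, hb⟩ hab
  exact inv_strictAnti₀ (tan_pos_of_pos_of_lt_pi_div_two ha₀ ha)
    (tan_lt_tan_of_nonneg_of_lt_pi_div_two ha₀.le hb hab)

theorem G1_strictAnti_general (ginv : ℝ → ℝ)
    (h_right : ∀ y ∈ Set.Ioi (0:ℝ),
      ginv y ∈ Set.Ioo 0 (Real.pi / 2) ∧ ginv y * Real.tan (ginv y) = y) :
    StrictAntiOn (fun y => ginv y / y) (Set.Ioi 0) := by
  have hmaps : MapsTo ginv (Ioi 0) (Ioo 0 (π / 2)) := fun y hy => (h_right y hy).1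
  have hmono : StrictMonoOn ginv (Ioi 0) :=
    (strictMonoOn_mul_tan.mono Ioo_subset_Ico_self).strictMonoOn_of_rightInvOn hmaps
      fun y hy => (h_right y hy).2
  have hG : EqOn (fun y => (tan (ginv y))⁻¹) (fun y => ginv y / y) (Ioi 0) := by
    intro y hy
    obtain ⟨⟨hx₀, -⟩, hxy⟩ := h_right y hy
    calc (tan (ginv y))⁻¹ = ginv y / (ginv y * tan (ginv y)) :=
          (div_mul_cancel_left₀ hx₀.ne' _).symm
      _ = ginv y / y := by rw [hxy]
  exact (strictAntiOn_inv_tan.comp_strictMonoOn hmono hmaps).congr hG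

/-- `g₁(x) = x·tan x` maps `(0, π/2)` bijectively onto `(0, ∞)`; `ginv` is its inverse.
The function `G₁(y) = g₁⁻¹(y)/y` is strictly decreasing on `(0, ∞)`. -/
theorem G1_strictAnti (ginv : ℝ → ℝ)
    (h_left : ∀ x ∈ Set.Ioo 0 (Real.pi / 2), ginv (x * Real.tan x) = x)
    (h_right : ∀ y ∈ Set.Ioi (0:ℝ),
      ginv y ∈ Set.Ioo 0 (Real.pi / 2) ∧ ginv y * Real.tan (ginv y) = y) :
    StrictAntiOn (fun y => ginv y / y) (Set.Ioi 0) :=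
  G1_strictAnti_general ginv h_right
end

section
/- The function H_2(y) = h_2^{-1}(y)/y is strictly increasing for y > 1, where h_2(x) = x·coth(x) maps (0, ∞) bijectively onto (1, ∞). -/
/-!
On `(1, ∞)`, write `y = h₂(x)` with `x = h₂⁻¹(y) > 0`; then `h₂⁻¹(y) / y = x / (x coth x) = tanh x`.
So `H₂ = tanh ∘ h₂⁻¹`, a composition of two increasing functions: `tanh` is the inverse of the
increasing `artanh`, and `h₂⁻¹` is the inverse of `h₂`, which is increasing because
`h₂'(x) = (sinh x cosh x - x) / sinh² x` and `sinh x cosh x = sinh (2x) / 2 > x` for `x > 0`.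
-/

open Set Real

namespace Real

theorem tanh_strictMono : StrictMono tanh :=
  strictMonoOn_univ.1 <| strictMonoOn_artanh.strictMonoOn_of_rightInvOn
    (fun x _ => ⟨neg_one_lt_tanh x, tanh_lt_one x⟩) (fun x _ => artanh_tanh x)

theorem self_lt_sinh_mul_cosh {x : ℝ} (hx : 0 < x) : x < sinh x * cosh x := by
  have h := self_lt_sinh_iff.2 (by linarith : 0 < 2 * x)
  rw [sinh_two_mul] at h
  linarith

theorem hasDerivAt_mul_cosh_div_sinh {x : ℝ} (hx : x ≠ 0) :
    HasDerivAt (fun x => x * (cosh x / sinh x)) ((sinh x * cosh x - x) / sinh x ^ 2) x := by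
  have hs : sinh x ≠ 0 := sinh_ne_zero.2 hx
  refine ((hasDerivAt_id' x).fun_mul
    ((hasDerivAt_cosh x).fun_div (hasDerivAt_sinh x) hs)).congr_deriv ?_
  field_simp
  linear_combination (-x) * cosh_sq_sub_sinh_sq x

theorem strictMonoOn_mul_cosh_div_sinh :
    StrictMonoOn (fun x => x * (cosh x / sinh x)) (Ioi 0) := by
  refine strictMonoOn_of_deriv_pos (convex_Ioi 0)
    (fun x hx => (hasDerivAt_mul_cosh_div_sinh (ne_of_gt hx)).continuousAt.continuousWithinAt)
    fun x hx => ?_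
  rw [interior_Ioi] at hx
  rw [(hasDerivAt_mul_cosh_div_sinh (ne_of_gt hx)).deriv]
  have := self_lt_sinh_mul_cosh hx
  have := sinh_pos_iff.2 hx
  exact div_pos (by linarith) (by positivity)

theorem tanh_eq_div_mul_cosh_div_sinh (x : ℝ) : tanh x = x / (x * (cosh x / sinh x)) := by
  rcases eq_or_ne x 0 with rfl | hx
  · simp
  · have := sinh_ne_zero.2 hx
    rw [tanh_eq_sinh_div_cosh]
    field_simp

end Real

theorem H2_strictMono_general (hinv : ℝ → ℝ)
    (h_right : ∀ y ∈ Set.Ioi (1:ℝ),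
      hinv y > 0 ∧ hinv y * (Real.cosh (hinv y) / Real.sinh (hinv y)) = y) :
    StrictMonoOn (fun y => hinv y / y) (Set.Ioi 1) := by
  have hinv_mono : StrictMonoOn hinv (Ioi 1) :=
    strictMonoOn_mul_cosh_div_sinh.strictMonoOn_of_rightInvOn
      (fun y hy => (h_right y hy).1) (fun y hy => (h_right y hy).2)
  exact (tanh_strictMono.comp_strictMonoOn hinv_mono).congr fun y hy =>
    (tanh_eq_div_mul_cosh_div_sinh (hinv y)).trans (by rw [(h_right y hy).2])

/-- `h₂(x) = x·coth x` maps `(0, ∞)` bijectively onto `(1, ∞)`; `hinv` is its inverse.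
The function `H₂(y) = h₂⁻¹(y)/y` is strictly increasing on `(1, ∞)`. -/
theorem H2_strictMono (hinv : ℝ → ℝ)
    (h_left : ∀ x > (0:ℝ), hinv (x * (Real.cosh x / Real.sinh x)) = x)
    (h_right : ∀ y ∈ Set.Ioi (1:ℝ),
      hinv y > 0 ∧ hinv y * (Real.cosh (hinv y) / Real.sinh (hinv y)) = y) :
    StrictMonoOn (fun y => hinv y / y) (Set.Ioi 1) :=
  H2_strictMono_general hinv h_right
end

section
/- For all x in (0, π/2), the quantity 2x·tan(x) + 2·sin²(x) − 4x² is strictly positive. -/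
open Real Set

lemma tan_add_two_sin_gt (x : ℝ) (hx : x ∈ Set.Ioo 0 (Real.pi / 2)) :
    3 * x < Real.tan x + 2 * Real.sin x := by
  obtain ⟨hx0, hxp⟩ := hx
  set f : ℝ → ℝ := fun y => Real.tan y + 2 * Real.sin y - 3 * y with hf
  have hcos : ∀ y ∈ Set.Ico (0:ℝ) (Real.pi/2), Real.cos y ≠ 0 := by
    intro y hy
    exact ne_of_gt (Real.cos_pos_of_mem_Ioo ⟨by linarith [hy.1, Real.pi_pos], hy.2⟩)
  have hmono : StrictMonoOn f (Set.Ico 0 (Real.pi/2)) := by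
    apply strictMonoOn_of_deriv_pos (convex_Ico _ _)
    · apply ContinuousOn.sub
      apply ContinuousOn.add
      · exact Real.continuousOn_tan.mono (fun y hy => hcos y hy)
      · exact (continuous_const.mul Real.continuous_sin).continuousOn
      · exact (continuous_const.mul continuous_id).continuousOn
    · intro y hy
      rw [interior_Ico] at hy
      have hc : Real.cos y ≠ 0 := hcos y (Set.Ioo_subset_Ico_self hy)
      have hder : HasDerivAt f (1 / Real.cos y ^ 2 + 2 * Real.cos y - 3) y := by
        have h1 := Real.hasDerivAt_tan hc
        have h2 := (Real.hasDerivAt_sin y).const_mul 2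
        have h3 : HasDerivAt (fun z : ℝ => 3 * z) 3 y := by
          simpa using (hasDerivAt_id y).const_mul 3
        exact (h1.add h2).sub h3
      rw [hder.deriv]
      have hcpos : 0 < Real.cos y := Real.cos_pos_of_mem_Ioo
        ⟨by linarith [hy.1, Real.pi_pos], hy.2⟩
      have hclt : Real.cos y < 1 := by
        have hs : 0 < Real.sin y := Real.sin_pos_of_pos_of_lt_pi hy.1 (by linarith [Real.pi_pos, hy.2])
        nlinarith [Real.sin_sq_add_cos_sq y]
      have heq : 1 / Real.cos y ^ 2 + 2 * Real.cos y - 3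
          = (1 + 2 * Real.cos y ^ 3 - 3 * Real.cos y ^ 2) / Real.cos y ^ 2 := by
        field_simp
      rw [heq]
      apply div_pos _ (by positivity)
      nlinarith [sq_nonneg (1 - Real.cos y), hcpos]
  have h0 : (0:ℝ) ∈ Set.Ico (0:ℝ) (Real.pi/2) := ⟨le_refl _, by linarith [Real.pi_pos]⟩
  have hxm : x ∈ Set.Ico (0:ℝ) (Real.pi/2) := ⟨le_of_lt hx0, hxp⟩
  have := hmono h0 hxm hx0
  simp [hf, Real.tan_zero] at this
  linarith

/-- For all `x ∈ (0, π/2)`, `2x·tan x + 2·sin² x − 4x² > 0`. -/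
theorem trig_pos (x : ℝ) (hx : x ∈ Set.Ioo 0 (Real.pi / 2)) :
    2 * x * Real.tan x + 2 * (Real.sin x) ^ 2 - 4 * x ^ 2 > 0 := by
  have key := tan_add_two_sin_gt x hx
  nlinarith [key, hx.1, sq_nonneg (x - Real.sin x)]
end

section
/- The function y ↦ (g_1^{-1}(y))² is strictly concave on (0, ∞), where g_1(x) = x·tan(x) on (0, π/2). -/
open Real Set

noncomputable def Haux (s : ℝ) : ℝ := Real.tan s / (2*s) + 1 / (2 * Real.cos s ^ 2)

noncomputable def Gaux (u : ℝ) : ℝ := Real.sqrt u * Real.tan (Real.sqrt u)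

lemma Haux_hasDeriv {s : ℝ} (hs : s ∈ Set.Ioo 0 (Real.pi/2)) :
    HasDerivAt Haux ((1 / Real.cos s ^ 2 * (2*s) - Real.tan s * 2) / (2*s)^2
      + (0 * (2 * Real.cos s ^ 2) - 1 * (2 * ((2:ℕ) * Real.cos s ^ 1 * (-Real.sin s))))
        / (2 * Real.cos s ^ 2)^2) s := by
  have hcpos : 0 < Real.cos s := Real.cos_pos_of_mem_Ioo ⟨by linarith [hs.1, Real.pi_pos], hs.2⟩
  have hc : Real.cos s ≠ 0 := hcpos.ne'
  have hs0 : (2*s) ≠ 0 := by have := hs.1; positivity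
  have h1 : HasDerivAt (fun s => Real.tan s / (2*s))
      ((1 / Real.cos s ^ 2 * (2*s) - Real.tan s * 2) / (2*s)^2) s :=
    by
      have hd : HasDerivAt (fun x : ℝ => 2*x) 2 s := by
        simpa using (hasDerivAt_id s).const_mul 2
      exact (Real.hasDerivAt_tan hc).div hd hs0
  have hden : HasDerivAt (fun s => 2 * Real.cos s ^ 2)
      (2 * ((2:ℕ) * Real.cos s ^ 1 * (-Real.sin s))) s :=
    ((Real.hasDerivAt_cos s).pow 2).const_mul 2
  have hden0 : 2 * Real.cos s ^ 2 ≠ 0 := by positivity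
  have h2 := (hasDerivAt_const s (1:ℝ)).div hden hden0
  exact h1.add h2

lemma Haux_deriv_pos {s : ℝ} (hs : s ∈ Set.Ioo 0 (Real.pi/2)) :
    0 < (1 / Real.cos s ^ 2 * (2*s) - Real.tan s * 2) / (2*s)^2
      + (0 * (2 * Real.cos s ^ 2) - 1 * (2 * ((2:ℕ) * Real.cos s ^ 1 * (-Real.sin s))))
        / (2 * Real.cos s ^ 2)^2 := by
  have hcpos : 0 < Real.cos s := Real.cos_pos_of_mem_Ioo ⟨by linarith [hs.1, Real.pi_pos], hs.2⟩
  have hspos := hs.1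
  have hsin : 0 < Real.sin s := Real.sin_pos_of_pos_of_lt_pi hspos (by linarith [hs.2, Real.pi_pos])
  have key : Real.sin s * Real.cos s < s := by
    have h2s : Real.sin (2*s) < 2*s := Real.sin_lt (by linarith)
    rw [Real.sin_two_mul] at h2s
    linarith
  have t1 : 0 < (1 / Real.cos s ^ 2 * (2*s) - Real.tan s * 2) / (2*s)^2 := by
    apply div_pos _ (by positivity)
    rw [Real.tan_eq_sin_div_cos]
    rw [show 1 / Real.cos s ^ 2 * (2*s) - Real.sin s / Real.cos s * 2
        = (2*s - 2 * (Real.sin s * Real.cos s)) / Real.cos s ^ 2 by field_simp]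
    apply div_pos (by linarith) (by positivity)
  have t2 : 0 < (0 * (2 * Real.cos s ^ 2) - 1 * (2 * ((2:ℕ) * Real.cos s ^ 1 * (-Real.sin s))))
        / (2 * Real.cos s ^ 2)^2 := by
    apply div_pos _ (by positivity)
    simp only [pow_one]
    push_cast
    nlinarith [mul_pos hcpos hsin]
  linarith

lemma Haux_mono : StrictMonoOn Haux (Set.Ioo 0 (Real.pi/2)) := by
  apply strictMonoOn_of_deriv_pos (convex_Ioo _ _)
  · intro s hs
    exact (Haux_hasDeriv hs).differentiableAt.continuousAt.continuousWithinAt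
  · rw [interior_Ioo]
    intro s hs
    rw [(Haux_hasDeriv hs).deriv]
    exact Haux_deriv_pos hs

lemma sqrt_mem {u : ℝ} (hu : u ∈ Set.Ioo 0 ((Real.pi/2)^2)) :
    Real.sqrt u ∈ Set.Ioo 0 (Real.pi/2) := by
  constructor
  · exact Real.sqrt_pos.2 hu.1
  · exact (Real.sqrt_lt' (by positivity)).2 hu.2

lemma Gaux_hasDeriv {u : ℝ} (hu : u ∈ Set.Ioo 0 ((Real.pi/2)^2)) :
    HasDerivAt Gaux (Haux (Real.sqrt u)) u := by
  set s := Real.sqrt u with hsdef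
  have hsmem := sqrt_mem hu
  have hcpos : 0 < Real.cos s :=
    Real.cos_pos_of_mem_Ioo ⟨by linarith [hsmem.1, Real.pi_pos], hsmem.2⟩
  have hc : Real.cos s ≠ 0 := hcpos.ne'
  have houter : HasDerivAt (fun x => x * Real.tan x) (1 * Real.tan s + s * (1 / Real.cos s ^ 2)) s :=
    (hasDerivAt_id s).mul (Real.hasDerivAt_tan hc)
  have hsq : HasDerivAt Real.sqrt (1 / (2 * Real.sqrt u)) u := Real.hasDerivAt_sqrt hu.1.ne'
  have := houter.comp u hsq
  have heq : (1 * Real.tan s + s * (1 / Real.cos s ^ 2)) * (1 / (2 * Real.sqrt u)) = Haux s := by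
    rw [Haux, ← hsdef]
    have hs0 : s ≠ 0 := hsmem.1.ne'
    field_simp
  rw [heq] at this
  exact this

lemma Gaux_convex : StrictConvexOn ℝ (Set.Ioo 0 ((Real.pi/2)^2)) Gaux := by
  apply StrictMonoOn.strictConvexOn_of_deriv (convex_Ioo _ _)
  · intro u hu
    exact (Gaux_hasDeriv hu).differentiableAt.continuousAt.continuousWithinAt
  · rw [interior_Ioo]
    intro u1 hu1 u2 hu2 h
    rw [(Gaux_hasDeriv hu1).deriv, (Gaux_hasDeriv hu2).deriv]
    exact Haux_mono (sqrt_mem hu1) (sqrt_mem hu2)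
      (Real.sqrt_lt_sqrt hu1.1.le h)

lemma Gaux_pos {u : ℝ} (hu : u ∈ Set.Ioo 0 ((Real.pi/2)^2)) : 0 < Gaux u := by
  have hsmem := sqrt_mem hu
  exact mul_pos hsmem.1 (Real.tan_pos_of_pos_of_lt_pi_div_two hsmem.1 hsmem.2)

/-- `g₁(x) = x·tan x` on `(0, π/2)` with inverse `ginv`.
The function `y ↦ (g₁⁻¹ y)²` is strictly concave on `(0, ∞)`. -/
theorem g1inv_sq_strictConcave (ginv : ℝ → ℝ)
    (h_left : ∀ x ∈ Set.Ioo 0 (Real.pi / 2), ginv (x * Real.tan x) = x)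
    (h_right : ∀ y ∈ Set.Ioi (0:ℝ),
      ginv y ∈ Set.Ioo 0 (Real.pi / 2) ∧ ginv y * Real.tan (ginv y) = y) :
    StrictConcaveOn ℝ (Set.Ioi 0) (fun y => (ginv y) ^ 2) := by
  have hgmono : ∀ x1 ∈ Set.Ioo 0 (Real.pi/2), ∀ x2 ∈ Set.Ioo 0 (Real.pi/2),
      x1 < x2 → x1 * Real.tan x1 < x2 * Real.tan x2 := by
    intro x1 h1 x2 h2 hlt
    have ht1 : 0 < Real.tan x1 := Real.tan_pos_of_pos_of_lt_pi_div_two h1.1 h1.2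
    have ht : Real.tan x1 < Real.tan x2 :=
      Real.strictMonoOn_tan ⟨by linarith [h1.1, Real.pi_pos], h1.2⟩
        ⟨by linarith [h2.1, Real.pi_pos], h2.2⟩ hlt
    exact mul_lt_mul'' hlt ht h1.1.le ht1.le
  -- ginv is strictly monotone on Ioi 0
  have hginv_mono : ∀ y1 ∈ Set.Ioi (0:ℝ), ∀ y2 ∈ Set.Ioi (0:ℝ),
      y1 < y2 → ginv y1 < ginv y2 := by
    intro y1 hy1 y2 hy2 hlt
    by_contra h
    push_neg at h
    rcases eq_or_lt_of_le h with heq | hlt2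
    · have := (h_right y1 hy1).2
      rw [← heq] at this
      rw [(h_right y2 hy2).2] at this
      linarith
    · have := hgmono _ (h_right y2 hy2).1 _ (h_right y1 hy1).1 hlt2
      rw [(h_right y1 hy1).2, (h_right y2 hy2).2] at this
      linarith
  -- f is strictly monotone on Ioi 0
  have hfmono : ∀ y1 ∈ Set.Ioi (0:ℝ), ∀ y2 ∈ Set.Ioi (0:ℝ),
      y1 < y2 → (ginv y1)^2 < (ginv y2)^2 := by
    intro y1 hy1 y2 hy2 hlt
    exact pow_lt_pow_left₀ (hginv_mono _ hy1 _ hy2 hlt) ((h_right y1 hy1).1.1.le) (by norm_num)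
  -- square of ginv lands in the domain of Gaux
  have humem : ∀ y ∈ Set.Ioi (0:ℝ), (ginv y)^2 ∈ Set.Ioo 0 ((Real.pi/2)^2) := by
    intro y hy
    obtain ⟨⟨h0, h1⟩, _⟩ := h_right y hy
    exact ⟨by positivity, pow_lt_pow_left₀ h1 h0.le (by norm_num)⟩
  -- Gaux inverts f
  have hGf : ∀ y ∈ Set.Ioi (0:ℝ), Gaux ((ginv y)^2) = y := by
    intro y hy
    obtain ⟨⟨h0, h1⟩, heq⟩ := h_right y hy
    rw [Gaux, Real.sqrt_sq h0.le, heq]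
  have hfG : ∀ u ∈ Set.Ioo 0 ((Real.pi/2)^2), (ginv (Gaux u))^2 = u := by
    intro u hu
    rw [Gaux, h_left _ (sqrt_mem hu), Real.sq_sqrt hu.1.le]
  constructor
  · exact convex_Ioi 0
  · intro y1 hy1 y2 hy2 hne a b ha hb hab
    simp only [smul_eq_mul]
    set u1 := (ginv y1)^2 with hu1def
    set u2 := (ginv y2)^2 with hu2def
    have hu1 := humem y1 hy1
    have hu2 := humem y2 hy2
    have hune : u1 ≠ u2 := by
      intro h
      apply hne
      rw [← hGf y1 hy1, ← hGf y2 hy2, ← hu1def, ← hu2def, h]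
    have hconv := Gaux_convex.2 hu1 hu2 hune ha hb hab
    simp only [smul_eq_mul] at hconv
    rw [hGf y1 hy1, hGf y2 hy2] at hconv
    have hwmem : a*u1 + b*u2 ∈ Set.Ioo 0 ((Real.pi/2)^2) := by
      have := (convex_Ioo (0:ℝ) ((Real.pi/2)^2)) hu1 hu2 ha.le hb.le hab
      simpa using this
    have hGw : Gaux (a*u1 + b*u2) ∈ Set.Ioi (0:ℝ) := Gaux_pos hwmem
    have hcomb : a*y1 + b*y2 ∈ Set.Ioi (0:ℝ) := by
      have : (0:ℝ) < a*y1 + b*y2 := by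
        have := hy1.out; have := hy2.out
        nlinarith
      exact this
    have := hfmono _ hGw _ hcomb hconv
    rw [hfG _ hwmem] at this
    linarith
end

section
/- The function y ↦ (h_1^{-1}(y))² is strictly convex on (0, ∞), where h_1(x) = x·tanh(x) on (0, ∞). -/
open Real Set

namespace H1InvAux

lemma tanh_pos' {x : ℝ} (hx : 0 < x) : 0 < Real.tanh x := by
  rw [Real.tanh_eq_sinh_div_cosh]
  exact div_pos (Real.sinh_pos_iff.2 hx) (Real.cosh_pos x)

lemma tanh_lt_tanh' {a b : ℝ} (hab : a < b) : Real.tanh a < Real.tanh b := by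
  rw [Real.tanh_eq_sinh_div_cosh, Real.tanh_eq_sinh_div_cosh,
    div_lt_div_iff₀ (Real.cosh_pos a) (Real.cosh_pos b)]
  have h : 0 < Real.sinh (b - a) := Real.sinh_pos_iff.2 (by linarith)
  rw [Real.sinh_sub] at h
  linarith

lemma one_sub_tanh_sq (x : ℝ) : 1 - Real.tanh x ^ 2 = 1 / Real.cosh x ^ 2 := by
  have hc := (Real.cosh_pos x).ne'
  rw [Real.tanh_eq_sinh_div_cosh, div_pow]
  field_simp
  linarith [Real.cosh_sq_sub_sinh_sq x]

lemma one_sub_tanh_sq_pos (x : ℝ) : 0 < 1 - Real.tanh x ^ 2 := by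
  rw [one_sub_tanh_sq]; positivity

lemma hasDerivAt_tanh (x : ℝ) : HasDerivAt Real.tanh (1 - Real.tanh x ^ 2) x := by
  have h : HasDerivAt (fun y => Real.sinh y / Real.cosh y)
      ((Real.cosh x * Real.cosh x - Real.sinh x * Real.sinh x) / Real.cosh x ^ 2) x :=
    (Real.hasDerivAt_sinh x).div (Real.hasDerivAt_cosh x) (Real.cosh_pos x).ne'
  have he : Real.tanh = fun y => Real.sinh y / Real.cosh y := by
    funext y; exact Real.tanh_eq_sinh_div_cosh y
  have hval : 1 - Real.tanh x ^ 2
      = (Real.cosh x * Real.cosh x - Real.sinh x * Real.sinh x) / Real.cosh x ^ 2 := by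
    rw [one_sub_tanh_sq]
    congr 1
    nlinarith [Real.cosh_sq_sub_sinh_sq x]
  rw [hval, he]
  exact h

lemma self_mul_lt {x : ℝ} (hx : 0 < x) : x * (1 - Real.tanh x ^ 2) < Real.tanh x := by
  have hc := Real.cosh_pos x
  have hs : x < Real.sinh x := Real.self_lt_sinh_iff.2 hx
  have hsp : 0 < Real.sinh x := Real.sinh_pos_iff.2 hx
  rw [one_sub_tanh_sq, Real.tanh_eq_sinh_div_cosh, mul_one_div,
    div_lt_div_iff₀ (by positivity) hc]
  nlinarith [Real.one_le_cosh x, mul_pos hsp hc, mul_lt_mul_of_pos_right hs hc]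

noncomputable def q (x : ℝ) : ℝ := Real.tanh x / (2 * x) + (1 - Real.tanh x ^ 2) / 2

lemma q_pos {x : ℝ} (hx : 0 < x) : 0 < q x :=
  add_pos (div_pos (tanh_pos' hx) (by linarith))
    (by linarith [one_sub_tanh_sq_pos x])

lemma hasDerivAt_q {x : ℝ} (hx : x ≠ 0) :
    HasDerivAt q ((x * (1 - Real.tanh x ^ 2) - Real.tanh x) / (2 * x ^ 2)
      - Real.tanh x * (1 - Real.tanh x ^ 2)) x := by
  have h2x : (2:ℝ) * x ≠ 0 := mul_ne_zero two_ne_zero hx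
  have d1 := (hasDerivAt_tanh x).div ((hasDerivAt_id x).const_mul 2) h2x
  have d2 := (((hasDerivAt_tanh x).pow 2).const_sub 1).div_const 2
  have dq := d1.add d2
  refine dq.congr_deriv ?_
  simp only [id_eq]
  push_cast
  field_simp
  ring

lemma q_deriv_neg {x : ℝ} (hx : 0 < x) : deriv q x < 0 := by
  rw [(hasDerivAt_q hx.ne').deriv]
  have h1 : (x * (1 - Real.tanh x ^ 2) - Real.tanh x) / (2 * x ^ 2) < 0 :=
    div_neg_of_neg_of_pos (by linarith [self_mul_lt hx]) (by positivity)
  have h2 : 0 < Real.tanh x * (1 - Real.tanh x ^ 2) :=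
    mul_pos (tanh_pos' hx) (one_sub_tanh_sq_pos x)
  linarith

lemma q_strictAnti : StrictAntiOn q (Ioi 0) := by
  refine strictAntiOn_of_deriv_neg (convex_Ioi 0) ?_ ?_
  · exact fun x hx => ((hasDerivAt_q (ne_of_gt hx)).continuousAt).continuousWithinAt
  · rw [interior_Ioi]; exact fun x hx => q_deriv_neg hx

end H1InvAux

open H1InvAux

/-- `h₁(x) = x·tanh x` on `(0, ∞)` with inverse `hinv`.
The function `y ↦ (h₁⁻¹ y)²` is strictly convex on `(0, ∞)`. -/
theorem h1inv_sq_strictConvex (hinv : ℝ → ℝ)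
    (h_left : ∀ x > (0:ℝ), hinv (x * Real.tanh x) = x)
    (h_right : ∀ y ∈ Set.Ioi (0:ℝ),
      hinv y > 0 ∧ hinv y * Real.tanh (hinv y) = y) :
    StrictConvexOn ℝ (Set.Ioi 0) (fun y => (hinv y) ^ 2) := by
  have hf_mono : ∀ a b : ℝ, 0 < a → a < b → a * Real.tanh a < b * Real.tanh b := by
    intro a b ha hab
    have h := tanh_lt_tanh' hab
    nlinarith [tanh_pos' ha]
  have hmono : StrictMonoOn hinv (Set.Ioi 0) := by
    intro y₁ h₁ y₂ h₂ h12
    obtain ⟨p₁, e₁⟩ := h_right y₁ h₁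
    obtain ⟨p₂, e₂⟩ := h_right y₂ h₂
    by_contra hle
    push_neg at hle
    rcases eq_or_lt_of_le hle with heq | hlt
    · rw [heq] at e₂
      rw [e₁] at e₂
      simp only [Set.mem_Ioi] at h₁ h₂
      linarith
    · have h := hf_mono _ _ p₂ hlt
      rw [e₁, e₂] at h
      simp only [Set.mem_Ioi] at h₁ h₂
      linarith
  have hcontAt : ∀ y ∈ Set.Ioi (0:ℝ), ContinuousAt hinv y := by
    intro y hy
    refine hmono.continuousAt_of_image_mem_nhds (Ioi_mem_nhds hy) ?_
    have himg : hinv '' (Set.Ioi 0) = Set.Ioi 0 := by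
      apply Set.Subset.antisymm
      · rintro _ ⟨z, hz, rfl⟩
        exact (h_right z hz).1
      · intro x hx
        exact ⟨x * Real.tanh x, mul_pos hx (tanh_pos' hx), h_left x hx⟩
    rw [himg]
    exact Ioi_mem_nhds (h_right y hy).1
  have hfd : ∀ x : ℝ, HasDerivAt (fun z => z * Real.tanh z)
      (Real.tanh x + x * (1 - Real.tanh x ^ 2)) x := by
    intro x
    have h := (hasDerivAt_id x).mul (hasDerivAt_tanh x)
    refine h.congr_deriv ?_
    simp only [id_eq]
    ring
  have hinv_deriv : ∀ y ∈ Set.Ioi (0:ℝ), HasDerivAt hinv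
      (Real.tanh (hinv y) + hinv y * (1 - Real.tanh (hinv y) ^ 2))⁻¹ y := by
    intro y hy
    have hx := (h_right y hy).1
    refine HasDerivAt.of_local_left_inverse (hcontAt y hy) (hfd (hinv y)) ?_ ?_
    · exact ne_of_gt (add_pos (tanh_pos' hx)
        (mul_pos hx (one_sub_tanh_sq_pos (hinv y))))
    · filter_upwards [Ioi_mem_nhds hy] with z hz
      exact (h_right z hz).2
  have hsq_deriv : ∀ y ∈ Set.Ioi (0:ℝ), HasDerivAt (fun y => (hinv y) ^ 2)
      ((q (hinv y))⁻¹) y := by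
    intro y hy
    have hx := (h_right y hy).1
    have h := (hinv_deriv y hy).pow 2
    refine h.congr_deriv ?_
    have hd : (0:ℝ) < Real.tanh (hinv y) + hinv y * (1 - Real.tanh (hinv y) ^ 2) :=
      add_pos (tanh_pos' hx) (mul_pos hx (one_sub_tanh_sq_pos (hinv y)))
    have hqd : q (hinv y)
        = (Real.tanh (hinv y) + hinv y * (1 - Real.tanh (hinv y) ^ 2)) / (2 * hinv y) := by
      unfold q
      field_simp
    rw [hqd, inv_div, pow_one]
    push_cast
    rw [div_eq_mul_inv]
  have hderiv_eq : ∀ y ∈ Set.Ioi (0:ℝ),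
      deriv (fun y => (hinv y) ^ 2) y = (q (hinv y))⁻¹ :=
    fun y hy => (hsq_deriv y hy).deriv
  refine StrictMonoOn.strictConvexOn_of_deriv (convex_Ioi 0) ?_ ?_
  · exact fun y hy => (((hsq_deriv y hy)).continuousAt).continuousWithinAt
  · rw [interior_Ioi]
    intro y₁ h₁ y₂ h₂ h12
    rw [hderiv_eq y₁ h₁, hderiv_eq y₂ h₂]
    have hx1 := (h_right y₁ h₁).1
    have hx2 := (h_right y₂ h₂).1
    have hlt : hinv y₁ < hinv y₂ := hmono h₁ h₂ h12
    have hq : q (hinv y₂) < q (hinv y₁) := q_strictAnti hx1 hx2 hlt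
    exact inv_strictAnti₀ (q_pos hx2) hq
end

section
/- The function y ↦ (h_2^{-1}(y))² is strictly convex on (1, ∞), where h_2(x) = x·coth(x) on (0, ∞). -/
open Real Set

private lemma pos_of_deriv_pos (f f' : ℝ → ℝ)
    (hd : ∀ x : ℝ, HasDerivAt f (f' x) x) (h0 : f 0 = 0)
    (hpos : ∀ x : ℝ, 0 < x → 0 < f' x) : ∀ x : ℝ, 0 < x → 0 < f x := by
  intro x hx
  have hm : StrictMonoOn f (Ici 0) := by
    apply strictMonoOn_of_deriv_pos (convex_Ici 0)
    · exact fun y _ => (hd y).continuousAt.continuousWithinAt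
    · intro y hy
      rw [interior_Ici] at hy
      rw [(hd y).deriv]
      exact hpos y hy
  have := hm self_mem_Ici (mem_Ici.2 hx.le) hx
  rwa [h0] at this

private lemma P0_pos : ∀ x : ℝ, 0 < x →
    0 < Real.sinh x ^ 2 * Real.cosh x + x * Real.sinh x - 2 * x ^ 2 * Real.cosh x := by
  have d0 : ∀ x : ℝ, HasDerivAt
      (fun y => Real.sinh y ^ 2 * Real.cosh y + y * Real.sinh y - 2 * y ^ 2 * Real.cosh y)
      (2 * Real.sinh x * Real.cosh x ^ 2 + Real.sinh x ^ 3 + Real.sinh x - 3 * x * Real.cosh x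
        - 2 * x ^ 2 * Real.sinh x) x := by
    intro x
    have hs := Real.hasDerivAt_sinh x
    have hc := Real.hasDerivAt_cosh x
    have hx := hasDerivAt_id' (x := x)
    exact ((((hs.pow 2).mul hc).add (hx.mul hs)).sub (((hx.pow 2).const_mul 2).mul hc)).congr_deriv (by simp only [Pi.pow_apply, Nat.cast_ofNat]; ring)
  have d1 : ∀ x : ℝ, HasDerivAt
      (fun y => 2 * Real.sinh y * Real.cosh y ^ 2 + Real.sinh y ^ 3 + Real.sinh y
        - 3 * y * Real.cosh y - 2 * y ^ 2 * Real.sinh y)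
      (2 * Real.cosh x ^ 3 + 7 * Real.sinh x ^ 2 * Real.cosh x - 2 * Real.cosh x
        - 7 * x * Real.sinh x - 2 * x ^ 2 * Real.cosh x) x := by
    intro x
    have hs := Real.hasDerivAt_sinh x
    have hc := Real.hasDerivAt_cosh x
    have hx := hasDerivAt_id' (x := x)
    exact ((((((hs.const_mul 2).mul (hc.pow 2)).add (hs.pow 3)).add hs).sub
      ((hx.const_mul 3).mul hc)).sub (((hx.pow 2).const_mul 2).mul hs)).congr_deriv (by simp only [Pi.pow_apply, Nat.cast_ofNat]; ring)
  have d2 : ∀ x : ℝ, HasDerivAt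
      (fun y => 2 * Real.cosh y ^ 3 + 7 * Real.sinh y ^ 2 * Real.cosh y - 2 * Real.cosh y
        - 7 * y * Real.sinh y - 2 * y ^ 2 * Real.cosh y)
      (20 * Real.sinh x * Real.cosh x ^ 2 + 7 * Real.sinh x ^ 3 - 9 * Real.sinh x
        - 11 * x * Real.cosh x - 2 * x ^ 2 * Real.sinh x) x := by
    intro x
    have hs := Real.hasDerivAt_sinh x
    have hc := Real.hasDerivAt_cosh x
    have hx := hasDerivAt_id' (x := x)
    exact ((((((hc.pow 3).const_mul 2).add (((hs.pow 2).const_mul 7).mul hc)).sub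
      (hc.const_mul 2)).sub ((hx.const_mul 7).mul hs)).sub
      (((hx.pow 2).const_mul 2).mul hc)).congr_deriv (by simp only [Pi.pow_apply, Nat.cast_ofNat]; ring)
  have d3 : ∀ x : ℝ, HasDerivAt
      (fun y => 20 * Real.sinh y * Real.cosh y ^ 2 + 7 * Real.sinh y ^ 3 - 9 * Real.sinh y
        - 11 * y * Real.cosh y - 2 * y ^ 2 * Real.sinh y)
      (20 * Real.cosh x ^ 3 + 61 * Real.sinh x ^ 2 * Real.cosh x - 20 * Real.cosh x
        - 15 * x * Real.sinh x - 2 * x ^ 2 * Real.cosh x) x := by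
    intro x
    have hs := Real.hasDerivAt_sinh x
    have hc := Real.hasDerivAt_cosh x
    have hx := hasDerivAt_id' (x := x)
    exact ((((((hs.const_mul 20).mul (hc.pow 2)).add ((hs.pow 3).const_mul 7)).sub
      (hs.const_mul 9)).sub ((hx.const_mul 11).mul hc)).sub
      (((hx.pow 2).const_mul 2).mul hs)).congr_deriv (by simp only [Pi.pow_apply, Nat.cast_ofNat]; ring)
  have d4 : ∀ x : ℝ, HasDerivAt
      (fun y => 20 * Real.cosh y ^ 3 + 61 * Real.sinh y ^ 2 * Real.cosh y - 20 * Real.cosh y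
        - 15 * y * Real.sinh y - 2 * y ^ 2 * Real.cosh y)
      (182 * Real.sinh x * Real.cosh x ^ 2 + 61 * Real.sinh x ^ 3 - 35 * Real.sinh x
        - 19 * x * Real.cosh x - 2 * x ^ 2 * Real.sinh x) x := by
    intro x
    have hs := Real.hasDerivAt_sinh x
    have hc := Real.hasDerivAt_cosh x
    have hx := hasDerivAt_id' (x := x)
    exact ((((((hc.pow 3).const_mul 20).add (((hs.pow 2).const_mul 61).mul hc)).sub
      (hc.const_mul 20)).sub ((hx.const_mul 15).mul hs)).sub
      (((hx.pow 2).const_mul 2).mul hc)).congr_deriv (by simp only [Pi.pow_apply, Nat.cast_ofNat]; ring)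
  have d5 : ∀ x : ℝ, HasDerivAt
      (fun y => 182 * Real.sinh y * Real.cosh y ^ 2 + 61 * Real.sinh y ^ 3 - 35 * Real.sinh y
        - 19 * y * Real.cosh y - 2 * y ^ 2 * Real.sinh y)
      (182 * Real.cosh x ^ 3 + 547 * Real.sinh x ^ 2 * Real.cosh x - 54 * Real.cosh x
        - 23 * x * Real.sinh x - 2 * x ^ 2 * Real.cosh x) x := by
    intro x
    have hs := Real.hasDerivAt_sinh x
    have hc := Real.hasDerivAt_cosh x
    have hx := hasDerivAt_id' (x := x)
    exact ((((((hs.const_mul 182).mul (hc.pow 2)).add ((hs.pow 3).const_mul 61)).sub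
      (hs.const_mul 35)).sub ((hx.const_mul 19).mul hc)).sub
      (((hx.pow 2).const_mul 2).mul hs)).congr_deriv (by simp only [Pi.pow_apply, Nat.cast_ofNat]; ring)
  have p6 : ∀ x : ℝ, 0 < x →
      0 < 182 * Real.cosh x ^ 3 + 547 * Real.sinh x ^ 2 * Real.cosh x - 54 * Real.cosh x
        - 23 * x * Real.sinh x - 2 * x ^ 2 * Real.cosh x := by
    intro x hx
    have hs : x < Real.sinh x := Real.self_lt_sinh_iff.2 hx
    have hc : 1 ≤ Real.cosh x := Real.one_le_cosh x
    have hcp : 0 < Real.cosh x := Real.cosh_pos x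
    have hsp : 0 < Real.sinh x := Real.sinh_pos_iff.2 hx
    have h1 : x * Real.sinh x ≤ Real.sinh x ^ 2 := by nlinarith
    have h2 : Real.sinh x ^ 2 ≤ Real.sinh x ^ 2 * Real.cosh x :=
      le_mul_of_one_le_right (sq_nonneg _) hc
    have h3 : x ^ 2 ≤ Real.sinh x ^ 2 := by nlinarith
    have h4 : x ^ 2 * Real.cosh x ≤ Real.sinh x ^ 2 * Real.cosh x :=
      mul_le_mul_of_nonneg_right h3 hcp.le
    have h5 : Real.cosh x ≤ Real.cosh x ^ 3 := by
      nlinarith [mul_nonneg (mul_nonneg hcp.le (sub_nonneg.2 hc))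
        (by linarith : (0:ℝ) ≤ Real.cosh x + 1)]
    nlinarith [mul_le_mul_of_nonneg_right h1 hcp.le]
  have p5 := pos_of_deriv_pos _ _ (fun x => d5 x) (by norm_num) p6
  have p4 := pos_of_deriv_pos _ _ (fun x => d4 x) (by norm_num) p5
  have p3 := pos_of_deriv_pos _ _ (fun x => d3 x) (by norm_num) p4
  have p2 := pos_of_deriv_pos _ _ (fun x => d2 x) (by norm_num) p3
  have p1 := pos_of_deriv_pos _ _ (fun x => d1 x) (by norm_num) p2
  exact pos_of_deriv_pos _ _ (fun x => d0 x) (by norm_num) p1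




private lemma G_hasDeriv {x : ℝ} (hx : 0 < x) :
    HasDerivAt (fun y => Real.cosh y / (2 * y * Real.sinh y) - 1 / (2 * Real.sinh y ^ 2))
      ((x * Real.sinh x ^ 2 - Real.cosh x * Real.sinh x - x * Real.cosh x ^ 2) /
        (2 * x ^ 2 * Real.sinh x ^ 2) + Real.cosh x / Real.sinh x ^ 3) x := by
  have hs := Real.hasDerivAt_sinh x
  have hc := Real.hasDerivAt_cosh x
  have hid := hasDerivAt_id' (x := x)
  have hsp : 0 < Real.sinh x := Real.sinh_pos_iff.2 hx
  have hden1 : 2 * x * Real.sinh x ≠ 0 := by positivity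
  have hden2 : 2 * Real.sinh x ^ 2 ≠ 0 := by positivity
  exact ((hc.div ((hid.const_mul 2).mul hs) hden1).sub
    ((hasDerivAt_const x (1:ℝ)).div ((hs.pow 2).const_mul 2) hden2)).congr_deriv (by
    simp only [Pi.pow_apply, Pi.mul_apply, Nat.cast_ofNat]
    field_simp
    ring)

private lemma G_deriv_neg {x : ℝ} (hx : 0 < x) :
    (x * Real.sinh x ^ 2 - Real.cosh x * Real.sinh x - x * Real.cosh x ^ 2) /
        (2 * x ^ 2 * Real.sinh x ^ 2) + Real.cosh x / Real.sinh x ^ 3 < 0 := by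
  have hsp : 0 < Real.sinh x := Real.sinh_pos_iff.2 hx
  have hP := P0_pos x hx
  have hid : Real.cosh x ^ 2 = Real.sinh x ^ 2 + 1 := Real.cosh_sq x
  have h1 : (0:ℝ) < 2 * x ^ 2 * Real.sinh x ^ 2 := by positivity
  have h2 : (0:ℝ) < Real.sinh x ^ 3 := by positivity
  rw [div_add_div _ _ (ne_of_gt h1) (ne_of_gt h2), div_neg_iff]
  right
  refine ⟨?_, by positivity⟩
  have key : (x * Real.sinh x ^ 2 - Real.cosh x * Real.sinh x - x * Real.cosh x ^ 2) *
      Real.sinh x ^ 3 + Real.cosh x * (2 * x ^ 2 * Real.sinh x ^ 2) =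
      -(Real.sinh x ^ 2 *
        (Real.sinh x ^ 2 * Real.cosh x + x * Real.sinh x - 2 * x ^ 2 * Real.cosh x)) := by
    linear_combination (-(x * Real.sinh x ^ 3)) * hid
  nlinarith [key, mul_pos (mul_pos hsp hsp) hP]

private lemma G_antiOn : StrictAntiOn
    (fun y => Real.cosh y / (2 * y * Real.sinh y) - 1 / (2 * Real.sinh y ^ 2)) (Ioi 0) := by
  apply strictAntiOn_of_deriv_neg (convex_Ioi 0)
  · exact fun x hx => ((G_hasDeriv hx).continuousAt).continuousWithinAt
  · intro x hx
    rw [interior_Ioi] at hx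
    rw [(G_hasDeriv hx).deriv]
    exact G_deriv_neg hx

private lemma G_pos {x : ℝ} (hx : 0 < x) :
    0 < Real.cosh x / (2 * x * Real.sinh x) - 1 / (2 * Real.sinh x ^ 2) := by
  have hsp : 0 < Real.sinh x := Real.sinh_pos_iff.2 hx
  have hcp : 0 < Real.cosh x := Real.cosh_pos x
  have hkey : x < Real.sinh x * Real.cosh x := by
    have h2 : 2 * x < Real.sinh (2 * x) := Real.self_lt_sinh_iff.2 (by linarith)
    rw [Real.sinh_two_mul] at h2
    linarith
  rw [sub_pos, div_lt_div_iff₀ (by positivity) (by positivity)]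
  nlinarith

private lemma F_hasDeriv {u : ℝ} (hu : 0 < u) :
    HasDerivAt (fun v => Real.sqrt v * (Real.cosh (Real.sqrt v) / Real.sinh (Real.sqrt v)))
      (Real.cosh (Real.sqrt u) / (2 * Real.sqrt u * Real.sinh (Real.sqrt u)) -
        1 / (2 * Real.sinh (Real.sqrt u) ^ 2)) u := by
  set x := Real.sqrt u with hxdef
  have hx : 0 < x := Real.sqrt_pos.2 hu
  have hsp : 0 < Real.sinh x := Real.sinh_pos_iff.2 hx
  have hs := Real.hasDerivAt_sinh x
  have hc := Real.hasDerivAt_cosh x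
  have hid := hasDerivAt_id' (x := x)
  have hinner : HasDerivAt (fun y => y * (Real.cosh y / Real.sinh y))
      (1 * (Real.cosh x / Real.sinh x) +
        x * ((Real.sinh x * Real.sinh x - Real.cosh x * Real.cosh x) / Real.sinh x ^ 2)) x :=
    hid.mul (hc.div hs (ne_of_gt hsp))
  have hsqrt : HasDerivAt Real.sqrt (1 / (2 * Real.sqrt u)) u := Real.hasDerivAt_sqrt hu.ne'
  have hcomp := hinner.comp u hsqrt
  simp only [Function.comp_def] at hcomp
  refine hcomp.congr_deriv ?_
  have hid2 : Real.cosh x ^ 2 = Real.sinh x ^ 2 + 1 := Real.cosh_sq x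
  field_simp
  linear_combination (-x ^ 2) * hid2

private lemma F_contOn : ContinuousOn
    (fun v => Real.sqrt v * (Real.cosh (Real.sqrt v) / Real.sinh (Real.sqrt v))) (Ioi 0) :=
  fun u hu => ((F_hasDeriv hu).continuousAt).continuousWithinAt

private lemma F_mono : StrictMonoOn
    (fun v => Real.sqrt v * (Real.cosh (Real.sqrt v) / Real.sinh (Real.sqrt v))) (Ioi 0) := by
  apply strictMonoOn_of_deriv_pos (convex_Ioi 0) F_contOn
  intro u hu
  rw [interior_Ioi] at hu
  rw [(F_hasDeriv hu).deriv]
  exact G_pos (Real.sqrt_pos.2 hu)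

private lemma F_concave : StrictConcaveOn ℝ (Ioi 0)
    (fun v => Real.sqrt v * (Real.cosh (Real.sqrt v) / Real.sinh (Real.sqrt v))) := by
  apply StrictAntiOn.strictConcaveOn_of_deriv (convex_Ioi 0) F_contOn
  rw [interior_Ioi]
  intro u1 h1 u2 h2 h12
  rw [(F_hasDeriv h1).deriv, (F_hasDeriv h2).deriv]
  exact G_antiOn (mem_Ioi.2 (Real.sqrt_pos.2 h1)) (mem_Ioi.2 (Real.sqrt_pos.2 h2))
    (Real.sqrt_lt_sqrt (le_of_lt h1) h12)

/-- `h₂(x) = x·coth x` on `(0, ∞)` with inverse `hinv`.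
The function `y ↦ (h₂⁻¹ y)²` is strictly convex on `(1, ∞)`. -/
theorem h2inv_sq_strictConvex (hinv : ℝ → ℝ)
    (h_left : ∀ x > (0:ℝ), hinv (x * (Real.cosh x / Real.sinh x)) = x)
    (h_right : ∀ y ∈ Set.Ioi (1:ℝ),
      hinv y > 0 ∧ hinv y * (Real.cosh (hinv y) / Real.sinh (hinv y)) = y) :
    StrictConvexOn ℝ (Set.Ioi 1) (fun y => (hinv y) ^ 2) := by
  set F : ℝ → ℝ := fun v => Real.sqrt v * (Real.cosh (Real.sqrt v) / Real.sinh (Real.sqrt v))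
    with hF
  have hFsq : ∀ z : ℝ, 0 < z → F (z ^ 2) = z * (Real.cosh z / Real.sinh z) := by
    intro z hz
    simp only [hF, Real.sqrt_sq hz.le]
  refine ⟨convex_Ioi 1, ?_⟩
  intro a ha b hb hab t u ht hu htu
  obtain ⟨hp, hfp⟩ := h_right a ha
  obtain ⟨hq, hfq⟩ := h_right b hb
  have hm : t • a + u • b ∈ Ioi (1:ℝ) := by
    simp only [smul_eq_mul, mem_Ioi]
    have := mem_Ioi.1 ha; have := mem_Ioi.1 hb
    nlinarith
  obtain ⟨hr, hfr⟩ := h_right _ hm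
  set p := hinv a
  set q := hinv b
  set r := hinv (t • a + u • b)
  have hpq : p ≠ q := by
    intro h
    exact hab (by rw [← hfp, ← hfq, h])
  have hpq2 : p ^ 2 ≠ q ^ 2 := by
    intro h
    exact hpq (by rw [← Real.sqrt_sq hp.le, ← Real.sqrt_sq hq.le, h])
  have hFp : F (p ^ 2) = a := by rw [hFsq p hp, hfp]
  have hFq : F (q ^ 2) = b := by rw [hFsq q hq, hfq]
  have hFr : F (r ^ 2) = t • a + u • b := by rw [hFsq r hr, hfr]
  have hmemp : p ^ 2 ∈ Ioi (0:ℝ) := mem_Ioi.2 (by positivity)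
  have hmemq : q ^ 2 ∈ Ioi (0:ℝ) := mem_Ioi.2 (by positivity)
  have hmemr : r ^ 2 ∈ Ioi (0:ℝ) := mem_Ioi.2 (by positivity)
  have hconc := F_concave.2 hmemp hmemq hpq2 ht hu htu
  have hlt : F (r ^ 2) < F (t • p ^ 2 + u • q ^ 2) := by
    rw [hFr]
    calc t • a + u • b = t • F (p ^ 2) + u • F (q ^ 2) := by rw [hFp, hFq]
    _ < F (t • p ^ 2 + u • q ^ 2) := hconc
  have hmemc : t • p ^ 2 + u • q ^ 2 ∈ Ioi (0:ℝ) := by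
    simp only [smul_eq_mul, mem_Ioi]
    have := mem_Ioi.1 hmemp; have := mem_Ioi.1 hmemq
    nlinarith
  have := (F_mono.lt_iff_lt hmemr hmemc).1 hlt
  simp only [smul_eq_mul] at this ⊢
  exact this
end

section
/- For all y > 0, we have (g_1^{-1}(y))² > y − y², where g_1(x) = x·tan(x) on (0, π/2). -/
/-- For all `y > 0`, `(g₁⁻¹ y)² > y − y²`, where `g₁(x) = x·tan x` on `(0, π/2)`. -/
theorem g1inv_sq_lower (ginv : ℝ → ℝ)
    (h_left : ∀ x ∈ Set.Ioo 0 (Real.pi / 2), ginv (x * Real.tan x) = x)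
    (h_right : ∀ y ∈ Set.Ioi (0:ℝ),
      ginv y ∈ Set.Ioo 0 (Real.pi / 2) ∧ ginv y * Real.tan (ginv y) = y) :
    ∀ y > (0:ℝ), (ginv y) ^ 2 > y - y ^ 2 := by
  intro y hy
  obtain ⟨⟨hx0, hx2⟩, hxy⟩ := h_right y hy
  set x := ginv y with hx
  have hpi := Real.pi_pos
  have hc : Real.cos x > 0 := Real.cos_pos_of_mem_Ioo ⟨by linarith, hx2⟩
  have hs : Real.sin x < x := Real.sin_lt hx0
  have hs0 : 0 < Real.sin x := Real.sin_pos_of_pos_of_lt_pi hx0 (by linarith)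
  have hc1 : Real.cos x ≤ 1 := Real.cos_le_one x
  have hsc : Real.sin x ^ 2 + Real.cos x ^ 2 = 1 := Real.sin_sq_add_cos_sq x
  have hct : Real.cos x * Real.tan x = Real.sin x := by
    rw [Real.tan_eq_sin_div_cos]; field_simp
  rw [← hxy, Real.tan_eq_sin_div_cos]
  have hc' : Real.cos x ≠ 0 := ne_of_gt hc
  have key : x * (Real.sin x * Real.cos x) < x * x :=
    mul_lt_mul_of_pos_left (lt_of_le_of_lt (mul_le_of_le_one_right hs0.le hc1) hs) hx0
  have h2 : x ^ 2 * (Real.sin x ^ 2 + Real.cos x ^ 2) = x ^ 2 * 1 := by rw [hsc]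
  have h3 : x * (Real.sin x / Real.cos x) - (x * (Real.sin x / Real.cos x)) ^ 2
      = (x * Real.sin x * Real.cos x - (x * Real.sin x) ^ 2) / Real.cos x ^ 2 := by
    field_simp
  rw [gt_iff_lt, h3, div_lt_iff₀ (by positivity)]
  nlinarith [key, h2]
end

section
/- The function x ↦ x/(1 + sin(x)/x) is strictly increasing for x in (0, π), where the value of sin(x)/x at relevant points is understood via the sinc function. -/
/-- The function `x ↦ x/(1 + sin x / x)` is strictly increasing on `(0, π)`. -/
theorem sinc_ratio_strictMono :
    StrictMonoOn (fun x => x / (1 + Real.sin x / x)) (Set.Ioo 0 Real.pi) := by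
  have key : StrictMonoOn (fun x => x^2 / (x + Real.sin x)) (Set.Ioo 0 Real.pi) := by
    apply strictMonoOn_of_deriv_pos (convex_Ioo 0 Real.pi)
    · apply ContinuousOn.div
      · fun_prop
      · fun_prop
      · intro x hx
        have h1 : 0 < Real.sin x := Real.sin_pos_of_pos_of_lt_pi hx.1 hx.2
        nlinarith [hx.1]
    · intro x hx
      rw [interior_Ioo] at hx
      have hx0 := hx.1
      have hs : 0 < Real.sin x := Real.sin_pos_of_pos_of_lt_pi hx.1 hx.2
      have hd : 0 < x + Real.sin x := by linarith
      have h : HasDerivAt (fun x => x^2 / (x + Real.sin x))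
          ((2*x * (x + Real.sin x) - x^2 * (1 + Real.cos x)) / (x + Real.sin x)^2) x := by
        have h1 : HasDerivAt (fun x : ℝ => x^2) (2*x) x := by
          simpa using (hasDerivAt_pow 2 x)
        have h2 : HasDerivAt (fun x : ℝ => x + Real.sin x) (1 + Real.cos x) x :=
          (hasDerivAt_id x).add (Real.hasDerivAt_sin x)
        exact h1.div h2 hd.ne'
      rw [h.deriv]
      have hc : Real.cos x ≤ 1 := Real.cos_le_one x
      have hnum : 0 < 2*x * (x + Real.sin x) - x^2 * (1 + Real.cos x) := by
        nlinarith [mul_pos hx0 hs]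
      exact div_pos hnum (by positivity)
  intro a ha b hb hab
  have hda : 0 < a + Real.sin a := by
    have := Real.sin_pos_of_pos_of_lt_pi ha.1 ha.2; have := ha.1; linarith
  have hdb : 0 < b + Real.sin b := by
    have := Real.sin_pos_of_pos_of_lt_pi hb.1 hb.2; have := hb.1; linarith
  have ha0 : a ≠ 0 := ha.1.ne'
  have hb0 : b ≠ 0 := hb.1.ne'
  have ea : a / (1 + Real.sin a / a) = a^2 / (a + Real.sin a) := by
    rw [div_eq_div_iff (by rw [add_div' _ _ _ ha0]; exact div_ne_zero (by linarith) ha0) hda.ne']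
    field_simp
  have eb : b / (1 + Real.sin b / b) = b^2 / (b + Real.sin b) := by
    rw [div_eq_div_iff (by rw [add_div' _ _ _ hb0]; exact div_ne_zero (by linarith) hb0) hdb.ne']
    field_simp
  simp only
  rw [ea, eb]
  exact key ha hb hab
end

section
/- The function y ↦ (g_2^{-1}(y))² − (g_1^{-1}(y))² is strictly increasing for y > 0, where g_1(x) = x·tan(x) on (0, π/2) and g_2(x) = −x·cot(x) on (0, π). -/
lemma aux_g1_mono : StrictMonoOn (fun x => x * Real.tan x) (Set.Ioo 0 (Real.pi / 2)) := by
  intro x hx y hy hxy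
  have htx : 0 < Real.tan x := Real.tan_pos_of_pos_of_lt_pi_div_two hx.1 hx.2
  have hty : Real.tan x < Real.tan y :=
    Real.strictMonoOn_tan ⟨by linarith [hx.1, Real.pi_pos], hx.2⟩
      ⟨by linarith [hy.1, Real.pi_pos], hy.2⟩ hxy
  have := hx.1
  simp only
  nlinarith

lemma aux_sin_anti {x y : ℝ} (hx : Real.pi / 2 ≤ x) (hxy : x < y) (hy : y ≤ Real.pi) :
    Real.sin y < Real.sin x := by
  have h1 : Real.sin x = Real.cos (x - Real.pi / 2) := by
    rw [show x - Real.pi/2 = -(Real.pi/2 - x) by ring, Real.cos_neg, Real.cos_pi_div_two_sub]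
  have h2 : Real.sin y = Real.cos (y - Real.pi / 2) := by
    rw [show y - Real.pi/2 = -(Real.pi/2 - y) by ring, Real.cos_neg, Real.cos_pi_div_two_sub]
  rw [h1, h2]
  apply Real.strictAntiOn_cos ⟨by linarith, by linarith [Real.pi_pos]⟩
    ⟨by linarith, by linarith [Real.pi_pos]⟩ (by linarith)

lemma aux_g2_mono : StrictMonoOn (fun x => -(x * (Real.cos x / Real.sin x)))
    (Set.Ioo (Real.pi / 2) Real.pi) := by
  intro x hx y hy hxy
  have hsx : 0 < Real.sin x := Real.sin_pos_of_pos_of_lt_pi (by linarith [Real.pi_pos, hx.1]) hx.2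
  have hsy : 0 < Real.sin y := Real.sin_pos_of_pos_of_lt_pi (by linarith [Real.pi_pos, hy.1]) hy.2
  have hcx : Real.cos x < 0 :=
    Real.cos_neg_of_pi_div_two_lt_of_lt hx.1 (by linarith [Real.pi_pos, hx.2])
  have hcy : Real.cos y < 0 :=
    Real.cos_neg_of_pi_div_two_lt_of_lt hy.1 (by linarith [Real.pi_pos, hy.2])
  have hc : Real.cos y < Real.cos x :=
    Real.strictAntiOn_cos ⟨by linarith [Real.pi_pos, hx.1], le_of_lt hx.2⟩
      ⟨by linarith [Real.pi_pos, hy.1], le_of_lt hy.2⟩ hxy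
  have hs : Real.sin y < Real.sin x := aux_sin_anti (le_of_lt hx.1) hxy (le_of_lt hy.2)
  have hx0 : 0 < x := by linarith [Real.pi_pos, hx.1]
  have hy0 : 0 < y := by linarith [Real.pi_pos, hy.1]
  simp only
  rw [show -(x * (Real.cos x / Real.sin x)) = x * (-Real.cos x) / Real.sin x by ring,
      show -(y * (Real.cos y / Real.sin y)) = y * (-Real.cos y) / Real.sin y by ring,
      div_lt_div_iff₀ hsx hsy]
  calc x * -Real.cos x * Real.sin y < y * -Real.cos x * Real.sin y := by
        nlinarith [mul_lt_mul_of_pos_right hxy (mul_pos (neg_pos.mpr hcx) hsy)]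
    _ < y * -Real.cos y * Real.sin y := by
        nlinarith [mul_lt_mul_of_pos_left (neg_lt_neg hc) (mul_pos hy0 hsy)]
    _ < y * -Real.cos y * Real.sin x := by
        nlinarith [mul_lt_mul_of_pos_left hs (mul_pos hy0 (neg_pos.mpr hcy))]

lemma aux_hasDerivAt_g1 (a : ℝ) (h : Real.cos a ≠ 0) :
    HasDerivAt (fun x => x * Real.tan x) (Real.tan a + a * (1 / Real.cos a ^ 2)) a := by
  have := (hasDerivAt_id a).fun_mul (Real.hasDerivAt_tan h)
  simpa using this

lemma aux_hasDerivAt_g2 (b : ℝ) (h : Real.sin b ≠ 0) :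
    HasDerivAt (fun x => -(x * (Real.cos x / Real.sin x)))
      (-(Real.cos b / Real.sin b) + b * (1 / Real.sin b ^ 2)) b := by
  have hdiv : HasDerivAt (fun x => Real.cos x / Real.sin x)
      ((-Real.sin b * Real.sin b - Real.cos b * Real.cos b) / Real.sin b ^ 2) b :=
    (Real.hasDerivAt_cos b).div (Real.hasDerivAt_sin b) h
  have := ((hasDerivAt_id b).fun_mul hdiv).fun_neg
  refine this.congr_deriv ?_
  change -(1 * (Real.cos b / Real.sin b) + b * _) = _
  have hs := Real.sin_sq_add_cos_sq b
  rw [show -Real.sin b * Real.sin b - Real.cos b * Real.cos b = -1 by linear_combination (-1) * hs]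
  ring

/-- `g₁(x) = x·tan x` on `(0, π/2)` and `g₂(x) = −x·cot x` on `(0, π)`, with inverses
`g1inv` and `g2inv`. The function `y ↦ (g₂⁻¹ y)² − (g₁⁻¹ y)²` is strictly increasing
for `y > 0`. -/
theorem g2inv_sq_sub_g1inv_sq_strictMono (g1inv g2inv : ℝ → ℝ)
    (h1_left : ∀ x ∈ Set.Ioo 0 (Real.pi / 2), g1inv (x * Real.tan x) = x)
    (h1_right : ∀ y ∈ Set.Ioi (0:ℝ),
      g1inv y ∈ Set.Ioo 0 (Real.pi / 2) ∧ g1inv y * Real.tan (g1inv y) = y)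
    (h2_left : ∀ x ∈ Set.Ioo 0 Real.pi,
      g2inv (-(x * (Real.cos x / Real.sin x))) = x)
    (h2_right : ∀ y ∈ Set.Ioi (-1:ℝ),
      g2inv y ∈ Set.Ioo 0 Real.pi ∧
        -(g2inv y * (Real.cos (g2inv y) / Real.sin (g2inv y))) = y) :
    StrictMonoOn (fun y => (g2inv y) ^ 2 - (g1inv y) ^ 2) (Set.Ioi 0) := by
  -- g2inv of a positive number lies in (π/2, π)
  have hbmem : ∀ y ∈ Set.Ioi (0:ℝ), g2inv y ∈ Set.Ioo (Real.pi / 2) Real.pi := by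
    intro y hy
    have hy0 : (0:ℝ) < y := hy
    obtain ⟨hb, heb⟩ := h2_right y (by simp only [Set.mem_Ioi]; linarith)
    have hs : 0 < Real.sin (g2inv y) := Real.sin_pos_of_pos_of_lt_pi hb.1 hb.2
    have hcq : Real.cos (g2inv y) / Real.sin (g2inv y) < 0 := by
      by_contra hcon
      push_neg at hcon
      nlinarith [mul_nonneg (le_of_lt hb.1) hcon]
    have hcneg : Real.cos (g2inv y) < 0 := by
      rcases div_neg_iff.mp hcq with ⟨_, h2⟩ | ⟨h1, _⟩
      · linarith
      · exact h1
    constructor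
    · by_contra hcon
      push_neg at hcon
      have : 0 ≤ Real.cos (g2inv y) :=
        Real.cos_nonneg_of_mem_Icc ⟨by linarith [hb.1, Real.pi_pos], hcon⟩
      linarith
    · exact hb.2
  -- strict monotonicity of the inverses
  have mono1 : StrictMonoOn g1inv (Set.Ioi 0) := by
    intro y hy z hz hyz
    obtain ⟨hay, hey⟩ := h1_right y hy
    obtain ⟨haz, hez⟩ := h1_right z hz
    by_contra hle
    push_neg at hle
    rcases eq_or_lt_of_le hle with h | h
    · rw [← hey, ← hez, h] at hyz; exact lt_irrefl _ hyz
    · have := aux_g1_mono haz hay h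
      simp only at this
      rw [hez, hey] at this
      linarith
  have mono2 : StrictMonoOn g2inv (Set.Ioi 0) := by
    intro y hy z hz hyz
    have hby := hbmem y hy
    have hbz := hbmem z hz
    obtain ⟨_, hey⟩ := h2_right y (by simp only [Set.mem_Ioi] at hy ⊢; linarith)
    obtain ⟨_, hez⟩ := h2_right z (by simp only [Set.mem_Ioi] at hz ⊢; linarith)
    by_contra hle
    push_neg at hle
    rcases eq_or_lt_of_le hle with h | h
    · rw [← hey, ← hez, h] at hyz; exact lt_irrefl _ hyz
    · have := aux_g2_mono hbz hby h
      simp only at this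
      rw [hez, hey] at this
      linarith
  -- continuity of the inverses
  have cont1 : ∀ y ∈ Set.Ioi (0:ℝ), ContinuousAt g1inv y := by
    intro y hy
    apply mono1.continuousAt_of_image_mem_nhds (Ioi_mem_nhds hy)
    apply Filter.mem_of_superset
      (Ioo_mem_nhds (h1_right y hy).1.1 (h1_right y hy).1.2)
    intro x hx
    have hx0 : 0 < x * Real.tan x :=
      mul_pos hx.1 (Real.tan_pos_of_pos_of_lt_pi_div_two hx.1 hx.2)
    exact ⟨x * Real.tan x, hx0, h1_left x hx⟩
  have cont2 : ∀ y ∈ Set.Ioi (0:ℝ), ContinuousAt g2inv y := by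
    intro y hy
    apply mono2.continuousAt_of_image_mem_nhds (Ioi_mem_nhds hy)
    apply Filter.mem_of_superset (Ioo_mem_nhds (hbmem y hy).1 (hbmem y hy).2)
    intro x hx
    have hx0' : 0 < x := by linarith [hx.1, Real.pi_pos]
    have hsx : 0 < Real.sin x := Real.sin_pos_of_pos_of_lt_pi hx0' hx.2
    have hcx : Real.cos x < 0 :=
      Real.cos_neg_of_pi_div_two_lt_of_lt hx.1 (by linarith [hx.2, Real.pi_pos])
    have hx0 : 0 < -(x * (Real.cos x / Real.sin x)) := by
      rw [show -(x * (Real.cos x / Real.sin x)) = x * (-Real.cos x) / Real.sin x by ring]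
      exact div_pos (mul_pos hx0' (by linarith)) hsx
    exact ⟨-(x * (Real.cos x / Real.sin x)), hx0,
      h2_left x ⟨hx0', hx.2⟩⟩
  -- main argument via positive derivative
  apply strictMonoOn_of_deriv_pos (convex_Ioi 0)
  · exact fun y hy => ((cont2 y hy).pow 2 |>.sub ((cont1 y hy).pow 2)).continuousWithinAt
  · intro y hy
    rw [interior_Ioi] at hy
    have hy0 : (0:ℝ) < y := hy
    obtain ⟨ha, hay⟩ := h1_right y hy
    obtain ⟨hb0, hby⟩ := h2_right y (by simp only [Set.mem_Ioi]; linarith)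
    have hbm := hbmem y hy
    set a := g1inv y with hadef
    set b := g2inv y with hbdef
    have ha0 : 0 < a := ha.1
    have hb0' : 0 < b := hb0.1
    have hab : a < b := lt_trans ha.2 hbm.1
    have hca : 0 < Real.cos a := Real.cos_pos_of_mem_Ioo ⟨by linarith [Real.pi_pos], ha.2⟩
    have hsb : 0 < Real.sin b := Real.sin_pos_of_pos_of_lt_pi hb0.1 hb0.2
    have hcb : Real.cos b < 0 :=
      Real.cos_neg_of_pi_div_two_lt_of_lt hbm.1 (by linarith [hbm.2, Real.pi_pos])
    have hta : Real.tan a = y / a := by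
      field_simp at hay ⊢
      linarith [hay]
    have hcotb : Real.cos b / Real.sin b = -(y / b) := by
      field_simp at hby ⊢
      linarith [hby]
    -- derivatives of the forward functions
    set d1 : ℝ := Real.tan a + a * (1 / Real.cos a ^ 2) with hd1def
    set d2 : ℝ := -(Real.cos b / Real.sin b) + b * (1 / Real.sin b ^ 2) with hd2def
    have hd1pos : 0 < d1 := by
      have := Real.tan_pos_of_pos_of_lt_pi_div_two ha.1 ha.2
      have h2 : 0 < a * (1 / Real.cos a ^ 2) := mul_pos ha0 (by positivity)
      rw [hd1def]; linarith
    have hd2pos : 0 < d2 := by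
      have h1 : 0 < -(Real.cos b / Real.sin b) := by
        rw [show -(Real.cos b / Real.sin b) = (-Real.cos b) / Real.sin b by ring]
        exact div_pos (by linarith) hsb
      have h2 : 0 < b * (1 / Real.sin b ^ 2) := mul_pos hb0' (by positivity)
      rw [hd2def]; linarith
    have Hg1 : HasDerivAt (fun x => x * Real.tan x) d1 a := aux_hasDerivAt_g1 a hca.ne'
    have Hg2 : HasDerivAt (fun x => -(x * (Real.cos x / Real.sin x))) d2 b :=
      aux_hasDerivAt_g2 b hsb.ne'
    -- derivatives of the inverse functions
    have Hinv1 : HasDerivAt g1inv d1⁻¹ y := by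
      apply HasDerivAt.of_local_left_inverse (cont1 y hy) Hg1 hd1pos.ne'
      filter_upwards [Ioi_mem_nhds hy] with z hz
      exact (h1_right z hz).2
    have Hinv2 : HasDerivAt g2inv d2⁻¹ y := by
      apply HasDerivAt.of_local_left_inverse (cont2 y hy) Hg2 hd2pos.ne'
      filter_upwards [Ioi_mem_nhds hy] with z hz
      exact (h2_right z (by simp only [Set.mem_Ioi] at hz ⊢; linarith)).2
    have Hf : HasDerivAt (fun y => (g2inv y) ^ 2 - (g1inv y) ^ 2)
        ((2:ℕ) * b ^ (2-1) * d2⁻¹ - (2:ℕ) * a ^ (2-1) * d1⁻¹) y :=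
      (Hinv2.pow 2).sub (Hinv1.pow 2)
    rw [Hf.deriv]
    -- key inequality: a * d2 < b * d1
    have hsec : 1 / Real.cos a ^ 2 = 1 + (y / a) ^ 2 := by
      have hs := Real.sin_sq_add_cos_sq a
      rw [← hta, Real.tan_eq_sin_div_cos]
      field_simp
      linarith [hs]
    have hcsc : 1 / Real.sin b ^ 2 = 1 + (y / b) ^ 2 := by
      have hs := Real.sin_sq_add_cos_sq b
      have : (y / b) ^ 2 = (Real.cos b / Real.sin b) ^ 2 := by rw [hcotb]; ring
      rw [this]
      field_simp
      linarith [hs]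
    have hkey : a * d2 < b * d1 := by
      rw [hd1def, hd2def, hta, hcotb, hsec, hcsc]
      rw [show a * (-(-(y / b)) + b * (1 + (y / b) ^ 2)) = a * y / b + a * b + a * y ^ 2 / b by
            field_simp
            ring,
          show b * (y / a + a * (1 + (y / a) ^ 2)) = b * y / a + a * b + b * y ^ 2 / a by
            field_simp
            ring]
      have h1 : a * y / b < b * y / a := by
        rw [div_lt_div_iff₀ (by linarith) ha0]
        nlinarith [mul_lt_mul_of_pos_left (mul_lt_mul'' hab hab ha0.le ha0.le) hy0]
      have h2 : a * y ^ 2 / b < b * y ^ 2 / a := by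
        rw [div_lt_div_iff₀ (by linarith) ha0]
        nlinarith [mul_lt_mul_of_pos_left (mul_lt_mul'' hab hab ha0.le ha0.le) (pow_pos hy0 2)]
      linarith
    have hfrac : a * d1⁻¹ < b * d2⁻¹ := by
      rw [← div_eq_mul_inv, ← div_eq_mul_inv, div_lt_div_iff₀ hd1pos hd2pos]
      exact hkey
    simp only [pow_one, Nat.cast_ofNat]
    nlinarith [hfrac]
end

section
/- The function f_1(x) = (coth(x) − x·csch²(x))/(2x) is strictly decreasing on (0, ∞), with f_1(x) → 1/3 as x → 0⁺ and f_1(x) → 0 as x → ∞. -/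
open Real Set Filter

noncomputable def Nf (x : ℝ) : ℝ := Real.sinh x * Real.cosh x - x
noncomputable def Df (x : ℝ) : ℝ := 2 * x * Real.sinh x ^ 2
noncomputable def Nf' (x : ℝ) : ℝ := 2 * Real.sinh x ^ 2
noncomputable def Df' (x : ℝ) : ℝ := 2 * Real.sinh x ^ 2 + 4 * x * Real.sinh x * Real.cosh x

lemma hNd (x : ℝ) : HasDerivAt Nf (Nf' x) x := by
  have h := ((Real.hasDerivAt_sinh x).mul (Real.hasDerivAt_cosh x)).sub (hasDerivAt_id x)
  refine h.congr_deriv ?_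
  simp only [Nf', id]
  nlinarith [Real.cosh_sq x]

lemma hDd (x : ℝ) : HasDerivAt Df (Df' x) x := by
  have h := ((hasDerivAt_id x).const_mul (2:ℝ)).mul ((Real.hasDerivAt_sinh x).pow 2)
  refine h.congr_deriv ?_
  simp only [Df', id, Pi.pow_apply]
  push_cast
  ring

lemma sinh_cosh_gt (x : ℝ) (hx : 0 < x) : x < Real.sinh x * Real.cosh x := by
  nlinarith [Real.self_lt_sinh_iff.2 hx, Real.one_le_cosh x, Real.sinh_pos_iff.2 hx]

lemma p_mono : StrictMonoOn (fun x => x * Real.cosh x / Real.sinh x) (Ioi (0:ℝ)) := by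
  apply strictMonoOn_of_deriv_pos (convex_Ioi 0)
  · exact ContinuousOn.div ((continuous_id.mul Real.continuous_cosh).continuousOn)
      Real.continuous_sinh.continuousOn
      (fun x hx => ne_of_gt (Real.sinh_pos_iff.2 hx))
  · intro x hx
    rw [interior_Ioi, mem_Ioi] at hx
    have hs : Real.sinh x ≠ 0 := ne_of_gt (Real.sinh_pos_iff.2 hx)
    have h1 : HasDerivAt (fun x => x * Real.cosh x) (Real.cosh x + x * Real.sinh x) x := by
      have := (hasDerivAt_id x).mul (Real.hasDerivAt_cosh x)
      refine this.congr_deriv ?_; simp [id, mul_comm]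
    have h2 := h1.div (Real.hasDerivAt_sinh x) hs
    rw [show deriv (fun x => x * Real.cosh x / Real.sinh x) x = _ from h2.deriv]
    have key : (Real.cosh x + x * Real.sinh x) * Real.sinh x - x * Real.cosh x * Real.cosh x
        = Real.sinh x * Real.cosh x - x := by nlinarith [Real.cosh_sq x]
    rw [key]
    apply div_pos (by linarith [sinh_cosh_gt x hx]) (by positivity)

lemma Df'_pos {x : ℝ} (hx : 0 < x) : 0 < Df' x := by
  have := Real.sinh_pos_iff.2 hx
  have := Real.cosh_pos (x := x)
  simp only [Df']
  positivity

lemma Nf'_pos {x : ℝ} (hx : 0 < x) : 0 < Nf' x := by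
  have := Real.sinh_pos_iff.2 hx
  simp only [Nf']; positivity

lemma Df_pos {x : ℝ} (hx : 0 < x) : 0 < Df x := by
  have := Real.sinh_pos_iff.2 hx
  simp only [Df]; positivity

lemma Nf_pos {x : ℝ} (hx : 0 < x) : 0 < Nf x := by
  simp only [Nf]; linarith [sinh_cosh_gt x hx]

lemma r_anti {a b : ℝ} (ha : 0 < a) (hab : a < b) :
    Nf' b * Df' a < Nf' a * Df' b := by
  have hb : 0 < b := ha.trans hab
  have hsa := Real.sinh_pos_iff.2 ha
  have hsb := Real.sinh_pos_iff.2 hb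
  have hp := p_mono (mem_Ioi.2 ha) (mem_Ioi.2 hb) hab
  simp only at hp
  rw [div_lt_div_iff₀ hsa hsb] at hp
  simp only [Nf', Df']
  nlinarith [mul_pos hsa hsb, mul_lt_mul_of_pos_left hp (mul_pos hsa hsb)]

lemma Nf_cont : Continuous Nf := (Real.continuous_sinh.mul Real.continuous_cosh).sub continuous_id
lemma Df_cont : Continuous Df := (continuous_const.mul continuous_id).mul (Real.continuous_sinh.pow 2)

lemma F_anti : StrictAntiOn (fun x => Nf x / Df x) (Ioi (0:ℝ)) := by
  intro x hx y hy hxy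
  rw [mem_Ioi] at hx hy
  simp only
  rw [div_lt_div_iff₀ (Df_pos hy) (Df_pos hx)]
  obtain ⟨c, hc, hceq⟩ := exists_ratio_hasDerivAt_eq_ratio_slope Nf Nf' hx
    Nf_cont.continuousOn (fun t _ => hNd t) Df Df' Df_cont.continuousOn (fun t _ => hDd t)
  obtain ⟨d, hd, hdeq⟩ := exists_ratio_hasDerivAt_eq_ratio_slope Nf Nf' hxy
    Nf_cont.continuousOn (fun t _ => hNd t) Df Df' Df_cont.continuousOn (fun t _ => hDd t)
  -- hceq : (Df x - Df 0) * Nf' c = (Nf x - Nf 0) * Df' c with Nf 0 = Df 0 = 0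
  have hN0 : Nf 0 = 0 := by simp [Nf]
  have hD0 : Df 0 = 0 := by simp [Df]
  rw [hN0, hD0, sub_zero, sub_zero] at hceq
  have hc0 : 0 < c := hc.1
  have hd0 : 0 < d := hx.trans hd.1
  have hcd : c < d := hc.2.trans hd.1
  have hr := r_anti hc0 hcd
  have hDc := Df'_pos hc0
  have hDd' := Df'_pos hd0
  have hNc := Nf'_pos hc0
  have hDx := Df_pos hx
  have hDy := Df_pos hy
  have hDxy : Df x < Df y := by
    simp only [Df]
    have hsx := Real.sinh_pos_iff.2 hx
    have hsy : Real.sinh x < Real.sinh y := Real.sinh_lt_sinh.2 hxy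
    have hs2 : Real.sinh x ^ 2 < Real.sinh y ^ 2 := by nlinarith
    nlinarith [hs2]
  have key : (Nf y - Nf x) * Df x * (Df' d * Df' c) < Nf x * (Df y - Df x) * (Df' d * Df' c) := by
    have h1 : (Nf y - Nf x) * Df x * (Df' d * Df' c)
        = ((Df y - Df x) * Df x) * (Nf' d * Df' c) := by
      linear_combination (-(Df x * Df' c)) * hdeq
    have h2 : Nf x * (Df y - Df x) * (Df' d * Df' c)
        = ((Df y - Df x) * Df x) * (Nf' c * Df' d) := by
      linear_combination (-((Df y - Df x) * Df' d)) * hceq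
    rw [h1, h2]
    exact mul_lt_mul_of_pos_left hr (mul_pos (sub_pos.2 hDxy) hDx)
  have key2 := lt_of_mul_lt_mul_right key (mul_pos hDd' hDc).le
  nlinarith [key2]

lemma sinh_div_self_tendsto : Tendsto (fun x => Real.sinh x / x) (nhdsWithin 0 (Ioi 0)) (nhds 1) := by
  have h := hasDerivAt_iff_tendsto_slope.1 (Real.hasDerivAt_sinh 0)
  rw [Real.cosh_zero] at h
  have h2 := h.mono_left (nhdsWithin_mono 0 (fun x hx => ne_of_gt hx : Ioi (0:ℝ) ⊆ {0}ᶜ))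
  refine h2.congr' ?_
  filter_upwards [self_mem_nhdsWithin] with x hx
  rw [mem_Ioi] at hx
  simp [slope_def_field, div_eq_div_iff (sub_ne_zero.2 (ne_of_gt hx)) (ne_of_gt hx)]

lemma limit13 : Tendsto (fun x => Nf x / Df x) (nhdsWithin 0 (Ioi 0)) (nhds (1/3)) := by
  apply HasDerivAt.lhopital_zero_nhdsGT (f' := Nf') (g' := Df')
  · exact Eventually.of_forall (fun x => hNd x)
  · exact Eventually.of_forall (fun x => hDd x)
  · filter_upwards [self_mem_nhdsWithin] with x hx
    exact (Df'_pos hx).ne'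
  · have := tendsto_nhdsWithin_of_tendsto_nhds (s := Ioi 0) (Nf_cont.tendsto 0)
    simpa [Nf] using this
  · have := tendsto_nhdsWithin_of_tendsto_nhds (s := Ioi 0) (Df_cont.tendsto 0)
    simpa [Df] using this
  · have hs := sinh_div_self_tendsto
    have hc : Tendsto Real.cosh (nhdsWithin 0 (Ioi 0)) (nhds 1) := by
      have := tendsto_nhdsWithin_of_tendsto_nhds (s := Ioi 0) (Real.continuous_cosh.tendsto 0)
      simpa using this
    have main : Tendsto (fun x => 2*(Real.sinh x/x)^2 / (2*(Real.sinh x/x)^2 + 4*(Real.sinh x/x)*Real.cosh x))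
        (nhdsWithin 0 (Ioi 0)) (nhds (2*1^2 / (2*1^2 + 4*1*1))) := by
      apply Tendsto.div
      · exact (tendsto_const_nhds.mul (hs.pow 2))
      · exact (tendsto_const_nhds.mul (hs.pow 2)).add ((tendsto_const_nhds.mul hs).mul hc)
      · norm_num
    norm_num at main
    refine main.congr' ?_
    filter_upwards [self_mem_nhdsWithin] with x hx
    rw [mem_Ioi] at hx
    have hx0 : x ≠ 0 := ne_of_gt hx
    have hd := Df'_pos hx
    simp only [Nf', Df']
    rw [div_eq_div_iff (by positivity) (by simpa [Df'] using hd.ne')]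
    field_simp

lemma coth_tendsto_one : Tendsto (fun x => Real.cosh x / Real.sinh x) atTop (nhds 1) := by
  have he : Tendsto (fun x : ℝ => Real.exp (-x)) atTop (nhds 0) :=
    Real.tendsto_exp_neg_atTop_nhds_zero
  have he2 : Tendsto (fun x : ℝ => Real.exp (-x) ^ 2) atTop (nhds 0) := by
    simpa using he.pow 2
  have main : Tendsto (fun x : ℝ => (1 + Real.exp (-x)^2) / (1 - Real.exp (-x)^2)) atTop
      (nhds ((1 + 0) / (1 - 0))) :=
    Tendsto.div (tendsto_const_nhds.add he2) (tendsto_const_nhds.sub he2) (by norm_num)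
  norm_num at main
  refine main.congr' ?_
  filter_upwards [eventually_gt_atTop 0] with x hx
  have hs : Real.sinh x > 0 := Real.sinh_pos_iff.2 hx
  have hab : Real.exp x * Real.exp (-x) = 1 := by
    rw [← Real.exp_add]; simp
  have hb : Real.exp (-x) ^ 2 < 1 := by
    have h1 : Real.exp (-x) < 1 := by
      rw [Real.exp_lt_one_iff]; linarith
    nlinarith [Real.exp_pos (-x)]
  rw [Real.cosh_eq, Real.sinh_eq]
  rw [div_eq_div_iff (by nlinarith) (by nlinarith [Real.exp_pos x, Real.exp_pos (-x), hab])]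
  linear_combination Real.exp (-x) * hab

lemma limit_atTop : Tendsto
    (fun x => (Real.cosh x / Real.sinh x - x / (Real.sinh x) ^ 2) / (2 * x))
    atTop (nhds 0) := by
  have hxinv : Tendsto (fun x : ℝ => (2 * x)⁻¹) atTop (nhds 0) :=
    tendsto_inv_atTop_zero.comp (tendsto_id.const_mul_atTop two_pos)
  have hxs : Tendsto (fun x : ℝ => x / Real.sinh x ^ 2) atTop (nhds 0) := by
    apply squeeze_zero' ?_ ?_ tendsto_inv_atTop_zero
    · filter_upwards [eventually_gt_atTop 0] with x hx
      have := Real.sinh_pos_iff.2 hx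
      positivity
    · filter_upwards [eventually_ge_atTop 1] with x hx
      have hx0 : (0:ℝ) < x := by linarith
      have hs : x < Real.sinh x := Real.self_lt_sinh_iff.2 hx0
      rw [div_le_iff₀ (by positivity), inv_mul_eq_div, le_div_iff₀ hx0]
      nlinarith
  have main : Tendsto (fun x => (Real.cosh x / Real.sinh x - x / Real.sinh x ^ 2) * (2*x)⁻¹)
      atTop (nhds ((1 - 0) * 0)) := (coth_tendsto_one.sub hxs).mul hxinv
  rw [show ((1:ℝ)-0)*0 = 0 by norm_num] at main
  exact main.congr fun x => (div_eq_mul_inv _ _).symm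

/-- `f₁(x) = (coth x − x·csch² x)/(2x)` is strictly decreasing on `(0, ∞)`,
tends to `1/3` as `x → 0⁺` and to `0` as `x → ∞`. -/
theorem f1_strictAnti_and_limits :
    StrictAntiOn
      (fun x => (Real.cosh x / Real.sinh x - x / (Real.sinh x) ^ 2) / (2 * x))
      (Set.Ioi 0) ∧
    Filter.Tendsto
      (fun x => (Real.cosh x / Real.sinh x - x / (Real.sinh x) ^ 2) / (2 * x))
      (nhdsWithin 0 (Set.Ioi 0)) (nhds (1 / 3)) ∧
    Filter.Tendsto
      (fun x => (Real.cosh x / Real.sinh x - x / (Real.sinh x) ^ 2) / (2 * x))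
      Filter.atTop (nhds 0) := by
  have feq : ∀ x : ℝ, 0 < x →
      (Real.cosh x / Real.sinh x - x / (Real.sinh x) ^ 2) / (2 * x) = Nf x / Df x := by
    intro x hx
    have hs : Real.sinh x ≠ 0 := ne_of_gt (Real.sinh_pos_iff.2 hx)
    have hx0 : x ≠ 0 := ne_of_gt hx
    simp only [Nf, Df]
    field_simp
  refine ⟨?_, ?_, limit_atTop⟩
  · intro x hx y hy hxy
    simp only
    rw [feq x hx, feq y hy]
    exact F_anti hx hy hxy
  · refine limit13.congr' ?_
    filter_upwards [self_mem_nhdsWithin] with x hx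
    exact (feq x hx).symm
end

section
/- The function f_2(x) = (tanh(x) + x·sech²(x))/(2x) is strictly decreasing on (0, ∞), with f_2(x) → 1 as x → 0⁺ and f_2(x) → 0 as x → ∞; moreover f_1(x) < f_2(x) for all x > 0, where f_1(x) = (coth(x) − x·csch²(x))/(2x). -/
open Real Filter Set

lemma keyA {x : ℝ} (hx : 0 < x) :
    Real.sinh x * Real.cosh x < x * (Real.cosh x ^ 2 + Real.sinh x ^ 2) := by
  have hmono : StrictMonoOn
      (fun t => t * (Real.cosh t ^ 2 + Real.sinh t ^ 2) - Real.sinh t * Real.cosh t)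
      (Set.Ici 0) := by
    apply strictMonoOn_of_deriv_pos (convex_Ici 0)
    · fun_prop
    · intro t ht
      rw [interior_Ici, Set.mem_Ioi] at ht
      have h : HasDerivAt
          (fun t => t * (Real.cosh t ^ 2 + Real.sinh t ^ 2) - Real.sinh t * Real.cosh t)
          (1 * (Real.cosh t ^ 2 + Real.sinh t ^ 2) +
            t * (2 * Real.cosh t ^ 1 * Real.sinh t + 2 * Real.sinh t ^ 1 * Real.cosh t) -
            (Real.cosh t * Real.cosh t + Real.sinh t * Real.sinh t)) t :=
        ((hasDerivAt_id t).mul (((Real.hasDerivAt_cosh t).pow 2).add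
          ((Real.hasDerivAt_sinh t).pow 2))).sub
          ((Real.hasDerivAt_sinh t).mul (Real.hasDerivAt_cosh t))
      rw [h.deriv]
      have hs : 0 < Real.sinh t := Real.sinh_pos_iff.2 ht
      have hc : 0 < Real.cosh t := Real.cosh_pos t
      nlinarith [mul_pos hs hc, mul_pos ht (mul_pos hs hc)]
  have h0 := hmono (Set.self_mem_Ici) (Set.mem_Ici.2 hx.le) hx
  simpa using h0

lemma keyB {x : ℝ} (hx : 0 < x) : x < Real.sinh x * Real.cosh x := by
  have h := Real.self_lt_sinh_iff.2 (by linarith : (0:ℝ) < 2 * x)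
  rw [Real.sinh_two_mul] at h
  linarith

/-- `f₂(x) = (tanh x + x·sech² x)/(2x)` is strictly decreasing on `(0, ∞)`, tends to `1`
as `x → 0⁺` and to `0` as `x → ∞`; moreover `f₁(x) < f₂(x)` for all `x > 0`, where
`f₁(x) = (coth x − x·csch² x)/(2x)`. -/
theorem f2_strictAnti_limits_and_f1_lt_f2 :
    StrictAntiOn
      (fun x => (Real.tanh x + x / (Real.cosh x) ^ 2) / (2 * x)) (Set.Ioi 0) ∧
    Filter.Tendsto
      (fun x => (Real.tanh x + x / (Real.cosh x) ^ 2) / (2 * x))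
      (nhdsWithin 0 (Set.Ioi 0)) (nhds 1) ∧
    Filter.Tendsto
      (fun x => (Real.tanh x + x / (Real.cosh x) ^ 2) / (2 * x))
      Filter.atTop (nhds 0) ∧
    ∀ x > (0:ℝ),
      (Real.cosh x / Real.sinh x - x / (Real.sinh x) ^ 2) / (2 * x)
        < (Real.tanh x + x / (Real.cosh x) ^ 2) / (2 * x) := by
  simp only [Real.tanh_eq_sinh_div_cosh]
  refine ⟨?_, ?_, ?_, ?_⟩
  · -- strict antitone
    apply strictAntiOn_of_deriv_neg (convex_Ioi 0)
    · apply ContinuousOn.div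
      · exact (Real.continuous_sinh.continuousOn.div Real.continuous_cosh.continuousOn
          (fun x _ => (Real.cosh_pos x).ne')).add
          (continuousOn_id.div ((Real.continuous_cosh.pow 2).continuousOn)
          (fun x _ => pow_ne_zero 2 (Real.cosh_pos x).ne'))
      · exact (continuous_const.mul continuous_id).continuousOn
      · intro x hx
        rw [Set.mem_Ioi] at hx
        positivity
    · intro x hx
      rw [interior_Ioi, Set.mem_Ioi] at hx
      have hc : 0 < Real.cosh x := Real.cosh_pos x
      have hs : 0 < Real.sinh x := Real.sinh_pos_iff.2 hx
      have h1 : HasDerivAt (fun x => Real.sinh x / Real.cosh x)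
          ((Real.cosh x * Real.cosh x - Real.sinh x * Real.sinh x) / Real.cosh x ^ 2) x :=
        (Real.hasDerivAt_sinh x).div (Real.hasDerivAt_cosh x) hc.ne'
      have h2 : HasDerivAt (fun x => x / Real.cosh x ^ 2)
          ((1 * Real.cosh x ^ 2 - x * (2 * Real.cosh x ^ 1 * Real.sinh x)) /
            (Real.cosh x ^ 2) ^ 2) x :=
        (hasDerivAt_id x).div ((Real.hasDerivAt_cosh x).pow 2) (pow_ne_zero 2 hc.ne')
      have h3 : HasDerivAt (fun x : ℝ => 2 * x) 2 x := by
        simpa using (hasDerivAt_id x).const_mul (2:ℝ)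
      have h4 := (h1.add h2).div h3 (by positivity : (2*x) ≠ 0)
      rw [show deriv (fun x => (Real.sinh x / Real.cosh x + x / Real.cosh x ^ 2) / (2 * x)) x = _ from h4.deriv, Pi.add_apply]
      apply div_neg_of_neg_of_pos _ (by positivity)
      have key := keyB hx
      have hid := Real.cosh_sq_sub_sinh_sq x
      have heq : ((Real.cosh x * Real.cosh x - Real.sinh x * Real.sinh x) / Real.cosh x ^ 2 +
            (1 * Real.cosh x ^ 2 - x * (2 * Real.cosh x ^ 1 * Real.sinh x)) /
              (Real.cosh x ^ 2) ^ 2) * (2 * x) -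
            (Real.sinh x / Real.cosh x + x / Real.cosh x ^ 2) * 2 =
          ((Real.cosh x * Real.cosh x - Real.sinh x * Real.sinh x) * Real.cosh x ^ 2 * (2*x)
            + (Real.cosh x ^ 2 - 2 * x * Real.cosh x * Real.sinh x) * (2*x)
            - 2 * Real.sinh x * Real.cosh x ^ 3 - 2 * x * Real.cosh x ^ 2) /
            Real.cosh x ^ 4 := by
        field_simp
        ring
      rw [heq]
      apply div_neg_of_neg_of_pos _ (by positivity)
      have h6 : x * Real.cosh x ^ 2 < Real.sinh x * Real.cosh x * Real.cosh x ^ 2 := by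
        nlinarith [mul_pos hc hc]
      have h7 : (Real.cosh x ^ 2 - Real.sinh x ^ 2) * (2 * x * Real.cosh x ^ 2)
          = 2 * x * Real.cosh x ^ 2 := by rw [hid]; ring
      nlinarith [h6, h7, hx, hs, hc, mul_pos (mul_pos hx hx) (mul_pos hc hs)]
  · -- limit at 0⁺
    have hd : HasDerivAt (fun x => Real.sinh x / Real.cosh x)
        ((Real.cosh 0 * Real.cosh 0 - Real.sinh 0 * Real.sinh 0) / Real.cosh 0 ^ 2) 0 :=
      (Real.hasDerivAt_sinh 0).div (Real.hasDerivAt_cosh 0) (Real.cosh_pos 0).ne'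
    have hslope := hasDerivAt_iff_tendsto_slope.1 hd
    simp only [Real.cosh_zero, Real.sinh_zero] at hslope
    norm_num at hslope
    have l1 : Filter.Tendsto (fun x => Real.sinh x / Real.cosh x / x)
        (nhdsWithin 0 (Set.Ioi 0)) (nhds 1) := by
      have h2 := hslope.mono_left
        (nhdsWithin_mono 0 (fun y hy => ne_of_gt hy : Set.Ioi (0:ℝ) ⊆ {(0:ℝ)}ᶜ))
      refine h2.congr (fun y => ?_)
      simp [slope_def_field]
    have l2 : Filter.Tendsto (fun x => 1 / Real.cosh x ^ 2)
        (nhdsWithin 0 (Set.Ioi 0)) (nhds 1) := by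
      have hcont : Continuous fun x : ℝ => 1 / Real.cosh x ^ 2 :=
        continuous_const.div (Real.continuous_cosh.pow 2)
          (fun x => pow_ne_zero 2 (Real.cosh_pos x).ne')
      have h := hcont.tendsto 0
      norm_num [Real.cosh_zero] at h
      simpa only [one_div] using h.mono_left nhdsWithin_le_nhds
    have l3 := (l1.mul_const (1/2 : ℝ)).add (l2.mul_const (1/2 : ℝ))
    norm_num at l3
    refine l3.congr' ?_
    filter_upwards [self_mem_nhdsWithin] with x hx
    rw [Set.mem_Ioi] at hx
    have hc := Real.cosh_pos x
    field_simp
  · -- limit at ∞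
    have hlim : Filter.Tendsto (fun x : ℝ => 1 / x) Filter.atTop (nhds 0) := by
      simpa only [one_div] using tendsto_inv_atTop_zero
    apply tendsto_of_tendsto_of_tendsto_of_le_of_le' tendsto_const_nhds hlim
    · filter_upwards [Filter.eventually_gt_atTop 0] with x hx
      have hc := Real.cosh_pos x
      have hs := (Real.sinh_pos_iff.2 hx).le
      positivity
    · filter_upwards [Filter.eventually_ge_atTop 1] with x hx
      have hx0 : (0:ℝ) < x := by linarith
      have hc := Real.cosh_pos x
      have hs : x < Real.sinh x := Real.self_lt_sinh_iff.2 hx0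
      have hcs : Real.sinh x < Real.cosh x := by
        nlinarith [Real.exp_pos (-x), Real.cosh_sub_sinh x]
      have h1 : Real.sinh x / Real.cosh x ≤ 1 := by
        rw [div_le_one hc]; linarith
      have h2 : x / Real.cosh x ^ 2 ≤ 1 := by
        rw [div_le_one (by positivity)]
        nlinarith
      calc (Real.sinh x / Real.cosh x + x / Real.cosh x ^ 2) / (2 * x)
          ≤ 2 / (2 * x) := by
            apply (div_le_div_iff_of_pos_right (by positivity)).2
            linarith
        _ = 1 / x := by field_simp
  · -- f1 < f2
    intro x hx
    have hc : 0 < Real.cosh x := Real.cosh_pos x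
    have hs : 0 < Real.sinh x := Real.sinh_pos_iff.2 hx
    have key := keyA hx
    have hid := Real.cosh_sq_sub_sinh_sq x
    have hnum : Real.cosh x / Real.sinh x - x / Real.sinh x ^ 2 <
        Real.sinh x / Real.cosh x + x / Real.cosh x ^ 2 := by
      rw [div_sub_div _ _ hs.ne' (by positivity : (Real.sinh x ^ 2) ≠ 0),
        div_add_div _ _ hc.ne' (by positivity : (Real.cosh x ^ 2) ≠ 0),
        div_lt_div_iff₀ (by positivity) (by positivity)]
      nlinarith [mul_lt_mul_of_pos_right key (mul_pos hs hc), hid,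
        mul_pos (mul_pos hs hs) (mul_pos hc hc), mul_pos hs hc]
    gcongr
end

section
/- The function z ↦ H_1(e^z) is strictly convex on ℝ, where H_1(y) = h_1^{-1}(y)/y and h_1(x) = x·tanh(x); equivalently, the map x ↦ x/h_1(x) composed appropriately gives that the second derivative of H_1(e^z) in z equals a positive quantity, which reduces to the inequality x² − sinh²(x)·cosh²(x) + 2x·cosh³(x)·sinh(x) > 0 for all x > 0. -/
private lemma sinh_lt_mul_cosh {x : ℝ} (hx : 0 < x) : Real.sinh x < x * Real.cosh x := by
  have hmono : StrictMonoOn (fun y : ℝ => y * Real.cosh y - Real.sinh y) (Set.Ici 0) := by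
    apply strictMonoOn_of_deriv_pos (convex_Ici 0)
    · exact ((continuous_id.mul Real.continuous_cosh).sub Real.continuous_sinh).continuousOn
    · intro y hy
      rw [interior_Ici, Set.mem_Ioi] at hy
      have hd : HasDerivAt (fun y : ℝ => y * Real.cosh y - Real.sinh y) (y * Real.sinh y) y := by
        have h := ((hasDerivAt_id' (x := y)).mul (Real.hasDerivAt_cosh y)).sub
          (Real.hasDerivAt_sinh y)
        refine h.congr_deriv (Eq.symm ?_)
        ring
      rw [hd.deriv]
      exact mul_pos hy (Real.sinh_pos_iff.mpr hy)
  have h := hmono Set.self_mem_Ici (Set.mem_Ici.mpr hx.le) hx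
  simp only [Real.sinh_zero, Real.cosh_zero] at h
  linarith

private lemma key_ineq {x : ℝ} (hx : 0 < x) :
    x ^ 2 - (Real.sinh x) ^ 2 * (Real.cosh x) ^ 2
      + 2 * x * (Real.cosh x) ^ 3 * Real.sinh x > 0 := by
  have hs : 0 < Real.sinh x := Real.sinh_pos_iff.mpr hx
  have hc : 0 < Real.cosh x := Real.cosh_pos x
  have h1 : Real.sinh x < x * Real.cosh x := sinh_lt_mul_cosh hx
  nlinarith [mul_lt_mul_of_pos_right h1 (mul_pos hs (mul_pos hc hc)),
    mul_pos (mul_pos hx hs) (mul_pos hc (mul_pos hc hc)), sq_nonneg x, mul_pos hx hx]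

/-- The function whose strict monotonicity on `(0,∞)` encodes the convexity. -/
noncomputable def Gf : ℝ → ℝ := fun x =>
  -(x * Real.cosh x) / (Real.sinh x * (Real.sinh x * Real.cosh x + x))

private lemma Gf_hasDeriv {x : ℝ} (hx : 0 < x) :
    HasDerivAt Gf
      ((-(1 * Real.cosh x + x * Real.sinh x) *
          (Real.sinh x * (Real.sinh x * Real.cosh x + x)) -
        -(x * Real.cosh x) *
          (Real.cosh x * (Real.sinh x * Real.cosh x + x) +
            Real.sinh x * ((Real.cosh x * Real.cosh x + Real.sinh x * Real.sinh x) + 1))) /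
        (Real.sinh x * (Real.sinh x * Real.cosh x + x)) ^ 2) x := by
  have hs : 0 < Real.sinh x := Real.sinh_pos_iff.mpr hx
  have hc : 0 < Real.cosh x := Real.cosh_pos x
  have hD : 0 < Real.sinh x * (Real.sinh x * Real.cosh x + x) :=
    mul_pos hs (add_pos (mul_pos hs hc) hx)
  have hN : HasDerivAt (fun y : ℝ => -(y * Real.cosh y))
      (-(1 * Real.cosh x + x * Real.sinh x)) x :=
    ((hasDerivAt_id' (x := x)).mul (Real.hasDerivAt_cosh x)).neg
  have hDd : HasDerivAt (fun y : ℝ => Real.sinh y * (Real.sinh y * Real.cosh y + y))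
      (Real.cosh x * (Real.sinh x * Real.cosh x + x) +
        Real.sinh x * ((Real.cosh x * Real.cosh x + Real.sinh x * Real.sinh x) + 1)) x :=
    (Real.hasDerivAt_sinh x).mul
      (((Real.hasDerivAt_sinh x).mul (Real.hasDerivAt_cosh x)).add (hasDerivAt_id' (x := x)))
  exact hN.div hDd (ne_of_gt hD)

private lemma Gf_strictMono : StrictMonoOn Gf (Set.Ioi (0:ℝ)) := by
  apply strictMonoOn_of_deriv_pos (convex_Ioi 0)
  · intro x hx
    exact (Gf_hasDeriv hx).continuousAt.continuousWithinAt
  · intro x hx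
    rw [interior_Ioi, Set.mem_Ioi] at hx
    rw [(Gf_hasDeriv hx).deriv]
    have hs : 0 < Real.sinh x := Real.sinh_pos_iff.mpr hx
    have hc : 0 < Real.cosh x := Real.cosh_pos x
    have hD : 0 < Real.sinh x * (Real.sinh x * Real.cosh x + x) :=
      mul_pos hs (add_pos (mul_pos hs hc) hx)
    apply div_pos _ (pow_pos hD 2)
    have hid : Real.cosh x ^ 2 - Real.sinh x ^ 2 = 1 := Real.cosh_sq_sub_sinh_sq x
    have heq : (-(1 * Real.cosh x + x * Real.sinh x) *
          (Real.sinh x * (Real.sinh x * Real.cosh x + x)) -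
        -(x * Real.cosh x) *
          (Real.cosh x * (Real.sinh x * Real.cosh x + x) +
            Real.sinh x * ((Real.cosh x * Real.cosh x + Real.sinh x * Real.sinh x) + 1))) =
        x ^ 2 - (Real.sinh x) ^ 2 * (Real.cosh x) ^ 2
          + 2 * x * (Real.cosh x) ^ 3 * Real.sinh x := by
      linear_combination x ^ 2 * hid
    rw [heq]
    exact key_ineq hx

/-- `h₁(x) = x·tanh x` with inverse `hinv`, and `H₁(y) = h₁⁻¹(y)/y`.
The map `z ↦ H₁(e^z)` is strictly convex on `ℝ`; the underlying inequality is
`x² − sinh² x · cosh² x + 2x·cosh³ x · sinh x > 0` for all `x > 0`. -/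
theorem H1_exp_strictConvex (hinv : ℝ → ℝ)
    (h_left : ∀ x > (0:ℝ), hinv (x * Real.tanh x) = x)
    (h_right : ∀ y ∈ Set.Ioi (0:ℝ),
      hinv y > 0 ∧ hinv y * Real.tanh (hinv y) = y) :
    StrictConvexOn ℝ Set.univ (fun z => hinv (Real.exp z) / Real.exp z) ∧
    ∀ x > (0:ℝ),
      x ^ 2 - (Real.sinh x) ^ 2 * (Real.cosh x) ^ 2
        + 2 * x * (Real.cosh x) ^ 3 * Real.sinh x > 0 := by
  have hψpos : ∀ z : ℝ, 0 < hinv (Real.exp z) := fun z =>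
    (h_right _ (Set.mem_Ioi.mpr (Real.exp_pos z))).1
  have hψeq : ∀ z : ℝ, hinv (Real.exp z) * Real.tanh (hinv (Real.exp z)) = Real.exp z := fun z =>
    (h_right _ (Set.mem_Ioi.mpr (Real.exp_pos z))).2
  -- tanh positivity
  have htanh_pos : ∀ x : ℝ, 0 < x → 0 < Real.tanh x := by
    intro x hx
    rw [Real.tanh_eq_sinh_div_cosh]
    exact div_pos (Real.sinh_pos_iff.mpr hx) (Real.cosh_pos x)
  -- strict monotonicity of h₁ on (0, ∞)
  have h1mono : StrictMonoOn (fun x : ℝ => x * Real.tanh x) (Set.Ioi (0:ℝ)) := by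
    intro a ha b hb hab
    rw [Set.mem_Ioi] at ha hb
    have htab : Real.tanh a < Real.tanh b := by
      rw [Real.tanh_eq_sinh_div_cosh, Real.tanh_eq_sinh_div_cosh,
        div_lt_div_iff₀ (Real.cosh_pos a) (Real.cosh_pos b)]
      have hsub : 0 < Real.sinh (b - a) := Real.sinh_pos_iff.mpr (by linarith)
      rw [Real.sinh_sub] at hsub
      linarith
    exact mul_lt_mul hab htab.le (htanh_pos a ha) hb.le
  -- strict monotonicity of ψ = fun z => hinv (exp z)
  have hψmono : StrictMono (fun z : ℝ => hinv (Real.exp z)) := by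
    intro z w hzw
    have h1 : hinv (Real.exp z) * Real.tanh (hinv (Real.exp z))
        < hinv (Real.exp w) * Real.tanh (hinv (Real.exp w)) := by
      rw [hψeq z, hψeq w]
      exact Real.exp_lt_exp.mpr hzw
    exact (h1mono.lt_iff_lt (Set.mem_Ioi.mpr (hψpos z)) (Set.mem_Ioi.mpr (hψpos w))).mp h1
  -- ψ hits every positive real
  have hψsurj : ∀ x : ℝ, 0 < x → ∃ z : ℝ, hinv (Real.exp z) = x := by
    intro x hx
    refine ⟨Real.log (x * Real.tanh x), ?_⟩
    rw [Real.exp_log (mul_pos hx (htanh_pos x hx))]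
    exact h_left x hx
  -- ψ is continuous
  have hψcont : ∀ z : ℝ, ContinuousAt (fun z : ℝ => hinv (Real.exp z)) z := by
    intro z
    apply StrictMonoOn.continuousAt_of_image_mem_nhds (hψmono.strictMonoOn Set.univ)
      Filter.univ_mem
    rw [Set.image_univ]
    apply Filter.mem_of_superset (isOpen_Ioi.mem_nhds (hψpos z))
    intro x hx
    obtain ⟨w, hw⟩ := hψsurj x hx
    exact ⟨w, hw⟩
  -- derivative of ψ
  have hψz : ∀ z : ℝ, HasDerivAt (fun z : ℝ => hinv (Real.exp z))
      (hinv (Real.exp z) * Real.sinh (hinv (Real.exp z)) * Real.cosh (hinv (Real.exp z)) /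
        (Real.sinh (hinv (Real.exp z)) * Real.cosh (hinv (Real.exp z)) + hinv (Real.exp z))) z := by
    intro z
    set x := hinv (Real.exp z) with hxdef
    have hx : 0 < x := hψpos z
    have hs : 0 < Real.sinh x := Real.sinh_pos_iff.mpr hx
    have hc : 0 < Real.cosh x := Real.cosh_pos x
    have htp : 0 < Real.tanh x := htanh_pos x hx
    have hSC : 0 < Real.sinh x * Real.cosh x + x := add_pos (mul_pos hs hc) hx
    have hid : Real.cosh x ^ 2 - Real.sinh x ^ 2 = 1 := Real.cosh_sq_sub_sinh_sq x
    have hh1 : HasDerivAt (fun y : ℝ => y * Real.tanh y)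
        ((Real.sinh x * Real.cosh x + x) / Real.cosh x ^ 2) x := by
      have heq : (fun y : ℝ => y * Real.tanh y) = fun y : ℝ => y * Real.sinh y / Real.cosh y := by
        funext y
        rw [Real.tanh_eq_sinh_div_cosh]
        ring
      rw [heq]
      have h := ((hasDerivAt_id' (x := x)).mul (Real.hasDerivAt_sinh x)).div
        (Real.hasDerivAt_cosh x) (ne_of_gt hc)
      refine h.congr_deriv (Eq.symm ?_)
      rw [div_eq_div_iff (ne_of_gt (pow_pos hc 2)) (ne_of_gt (pow_pos hc 2))]
      simp only [Pi.mul_apply]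
      linear_combination (-(x : ℝ)) * Real.cosh x ^ 2 * hid
    have hφ : HasDerivAt (fun y : ℝ => Real.log (y * Real.tanh y))
        ((Real.sinh x * Real.cosh x + x) / Real.cosh x ^ 2 / (x * Real.tanh x)) x :=
      hh1.log (ne_of_gt (mul_pos hx htp))
    have hφ'pos : 0 < (Real.sinh x * Real.cosh x + x) / Real.cosh x ^ 2 / (x * Real.tanh x) :=
      div_pos (div_pos hSC (pow_pos hc 2)) (mul_pos hx htp)
    have hfg : ∀ᶠ y in nhds z,
        (fun y : ℝ => Real.log (y * Real.tanh y)) (hinv (Real.exp y)) = y := by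
      apply Filter.Eventually.of_forall
      intro y
      show Real.log (hinv (Real.exp y) * Real.tanh (hinv (Real.exp y))) = y
      rw [hψeq y, Real.log_exp]
    have h := HasDerivAt.of_local_left_inverse (hψcont z) hφ (ne_of_gt hφ'pos) hfg
    refine h.congr_deriv (Eq.symm ?_)
    rw [Real.tanh_eq_sinh_div_cosh]
    field_simp
  -- derivative of f = ψ / exp
  have hfd : ∀ z : ℝ, HasDerivAt (fun z => hinv (Real.exp z) / Real.exp z)
      ((hinv (Real.exp z) * Real.sinh (hinv (Real.exp z)) * Real.cosh (hinv (Real.exp z)) /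
          (Real.sinh (hinv (Real.exp z)) * Real.cosh (hinv (Real.exp z)) + hinv (Real.exp z)) *
          Real.exp z -
        hinv (Real.exp z) * Real.exp z) / Real.exp z ^ 2) z := by
    intro z
    exact (hψz z).div (Real.hasDerivAt_exp z) (Real.exp_ne_zero z)
  -- the derivative equals Gf ∘ ψ
  have hderiv_eq : ∀ z : ℝ, deriv (fun z => hinv (Real.exp z) / Real.exp z) z
      = Gf (hinv (Real.exp z)) := by
    intro z
    rw [(hfd z).deriv]
    set x := hinv (Real.exp z) with hxdef
    have hx : 0 < x := hψpos z
    have hs : 0 < Real.sinh x := Real.sinh_pos_iff.mpr hx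
    have hc : 0 < Real.cosh x := Real.cosh_pos x
    have hSC : 0 < Real.sinh x * Real.cosh x + x := add_pos (mul_pos hs hc) hx
    have hE : Real.exp z = x * Real.tanh x := (hψeq z).symm
    rw [hE, Real.tanh_eq_sinh_div_cosh]
    unfold Gf
    field_simp
    ring
  refine ⟨?_, fun x hx => key_ineq hx⟩
  apply StrictMonoOn.strictConvexOn_of_deriv convex_univ
  · exact fun z _ => (hfd z).continuousAt.continuousWithinAt
  · rw [interior_univ]
    intro z _ w _ hzw
    rw [hderiv_eq z, hderiv_eq w]
    exact Gf_strictMono (Set.mem_Ioi.mpr (hψpos z)) (Set.mem_Ioi.mpr (hψpos w)) (hψmono hzw)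
end

section
/- For all x > 0, we have x² − sinh²(x)·cosh²(x) + 2x·cosh³(x)·sinh(x) > 0. -/
open Real

theorem sinh_le_mul_cosh {x : ℝ} (hx : 0 ≤ x) : sinh x ≤ x * cosh x := by
  have hmono : MonotoneOn (fun t : ℝ => t * cosh t - sinh t) (Set.Ici 0) := by
    refine monotoneOn_of_deriv_nonneg (convex_Ici 0) (by fun_prop) (by fun_prop) fun t ht => ?_
    have hderiv : deriv (fun t : ℝ => t * cosh t - sinh t) t = t * sinh t := by
      simp [Real.deriv_cosh, Real.deriv_sinh]
    rw [interior_Ici, Set.mem_Ioi] at ht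
    rw [hderiv]
    exact mul_nonneg ht.le (sinh_nonneg_iff.2 ht.le)
  simpa using hmono Set.self_mem_Ici (Set.mem_Ici.2 hx) hx

/-- For all `x > 0`, `x² − sinh² x · cosh² x + 2x·cosh³ x · sinh x > 0`. -/
theorem hyp_ineq (x : ℝ) (hx : 0 < x) :
    x ^ 2 - (Real.sinh x) ^ 2 * (Real.cosh x) ^ 2
      + 2 * x * (Real.cosh x) ^ 3 * Real.sinh x > 0 := by
  have hsinh : 0 < sinh x := sinh_pos_iff.2 hx
  have hdominant : sinh x ^ 2 * cosh x ^ 2 ≤ x * cosh x ^ 3 * sinh x := by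
    calc sinh x ^ 2 * cosh x ^ 2 = sinh x * (sinh x * cosh x ^ 2) := by ring
      _ ≤ x * cosh x * (sinh x * cosh x ^ 2) := by
          gcongr
          exact sinh_le_mul_cosh hx.le
      _ = x * cosh x ^ 3 * sinh x := by ring
  have hsq : 0 ≤ sinh x ^ 2 * cosh x ^ 2 := by positivity
  linarith [pow_pos hx 2]
end

section
/- If f_1, …, f_n : ℝ → ℝ are nonnegative strictly convex functions, then the map (z_1, …, z_n) ↦ √(f_1(z_1)² + ⋯ + f_n(z_n)²) is strictly convex on ℝⁿ. -/
/-- If `f 1, …, f n : ℝ → ℝ` are nonnegative strictly convex functions, then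
`z ↦ √(Σ i, f i (z i)²)` is strictly convex on `ℝⁿ`. -/
theorem norm_of_convex_components_strictConvex (n : ℕ) (f : Fin n → ℝ → ℝ)
    (h_nonneg : ∀ i, ∀ x : ℝ, 0 ≤ f i x)
    (h_convex : ∀ i, StrictConvexOn ℝ Set.univ (f i)) :
    StrictConvexOn ℝ Set.univ
      (fun z : Fin n → ℝ => Real.sqrt (∑ i, (f i (z i)) ^ 2)) := by
  refine ⟨convex_univ, ?_⟩
  intro x _ y _ hxy a b ha hb hab
  obtain ⟨i₀, hi₀⟩ := Function.ne_iff.mp hxy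
  set u : EuclideanSpace ℝ (Fin n) :=
    (WithLp.equiv 2 (Fin n → ℝ)).symm (fun i => f i (x i)) with hu
  set v : EuclideanSpace ℝ (Fin n) :=
    (WithLp.equiv 2 (Fin n → ℝ)).symm (fun i => f i (y i)) with hv
  have hcv : ∀ i, (a • u + b • v) i = a * f i (x i) + b * f i (y i) := by
    intro i
    simp [hu, hv]
  have hc : ∀ i, f i ((a • x + b • y) i) ≤ (a • u + b • v) i := by
    intro i
    rw [hcv i]
    exact (h_convex i).convexOn.2 (Set.mem_univ _) (Set.mem_univ _) ha.le hb.le hab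
  have hc0 : f i₀ ((a • x + b • y) i₀) < (a • u + b • v) i₀ := by
    rw [hcv i₀]
    exact (h_convex i₀).2 (Set.mem_univ _) (Set.mem_univ _) hi₀ ha hb hab
  have hsum : ∑ i, (f i ((a • x + b • y) i)) ^ 2 < ∑ i, ((a • u + b • v) i) ^ 2 := by
    apply Finset.sum_lt_sum
    · intro i _
      exact pow_le_pow_left₀ (h_nonneg i _) (hc i) 2
    · exact ⟨i₀, Finset.mem_univ _, by
        exact pow_lt_pow_left₀ hc0 (h_nonneg i₀ _) (by norm_num)⟩
  have hnorm : ∀ w : EuclideanSpace ℝ (Fin n), ‖w‖ = Real.sqrt (∑ i, (w i) ^ 2) := by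
    intro w
    rw [EuclideanSpace.norm_eq]
    congr 1
    exact Finset.sum_congr rfl fun i _ => by rw [Real.norm_eq_abs, sq_abs]
  calc Real.sqrt (∑ i, (f i ((a • x + b • y) i)) ^ 2)
      < Real.sqrt (∑ i, ((a • u + b • v) i) ^ 2) := by
        apply Real.sqrt_lt_sqrt (Finset.sum_nonneg fun i _ => sq_nonneg _) hsum
    _ = ‖a • u + b • v‖ := (hnorm _).symm
    _ ≤ a * ‖u‖ + b * ‖v‖ := by
        refine (norm_add_le _ _).trans ?_
        rw [norm_smul, norm_smul, Real.norm_eq_abs, Real.norm_eq_abs,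
          abs_of_pos ha, abs_of_pos hb]
    _ = a * Real.sqrt (∑ i, (f i (x i)) ^ 2) + b * Real.sqrt (∑ i, (f i (y i)) ^ 2) := by
        rw [hnorm u, hnorm v]
        simp [hu, hv]
end
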